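/- For every standard Young tableau T of partition shape, slink(slink_*(T)) = slink_*(slink(T)). -/

import Mathlib

open scoped Classical

noncomputable section

/-- `T` is a standard Young tableau of shape `μ` with entries `1, …, n`.
Here `μ` is a Young diagram (Mathlib convention: row `0` is the longest row,
so the reading word below reads rows from the largest row index down to row `0`,
which corresponds to French notation read from the top row down), and `T` assigns
`0` to cells outside `μ`. -/
def IsSYT (n : ℕ) (μ : YoungDiagram) (T : ℕ × ℕ → ℕ) : Prop :=
  (∀ c, c ∉ μ → T c = 0) ∧
  Set.BijOn T (↑μ.cells) (Set.Icc 1 n) ∧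
  (∀ i j : ℕ, (i, j + 1) ∈ μ → T (i, j) < T (i, j + 1)) ∧
  (∀ i j : ℕ, (i + 1, j) ∈ μ → T (i, j) < T (i + 1, j))

/-- The value `u` occurs before the value `v` in the row reading word of `T`
(rows read from the top row down, each row left to right). -/
def Precedes (μ : YoungDiagram) (T : ℕ × ℕ → ℕ) (u v : ℕ) : Prop :=
  ∃ cu ∈ μ.cells, ∃ cv ∈ μ.cells,
    T cu = u ∧ T cv = v ∧ (cv.1 < cu.1 ∨ (cu.1 = cv.1 ∧ cu.2 < cv.2))

/-- Interchange the values `a` and `b` in the filling `T`. -/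
def swapVals (a b : ℕ) (T : ℕ × ℕ → ℕ) : ℕ × ℕ → ℕ :=
  fun c => if T c = a then b else if T c = b then a else T c

/-- The elementary dual equivalence `d_i` acting on fillings via the row reading
word: identity if `i` occurs between `i-1` and `i+1`; if `i-1` is in the middle it
swaps the values `i` and `i+1`; if `i+1` is in the middle it swaps `i-1` and `i`. -/
def dT (μ : YoungDiagram) (i : ℕ) (T : ℕ × ℕ → ℕ) : ℕ × ℕ → ℕ :=
  if (Precedes μ T i (i-1) ∧ Precedes μ T (i-1) (i+1)) ∨
     (Precedes μ T (i+1) (i-1) ∧ Precedes μ T (i-1) i) then swapVals i (i+1) T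
  else if (Precedes μ T i (i+1) ∧ Precedes μ T (i+1) (i-1)) ∨
     (Precedes μ T (i-1) (i+1) ∧ Precedes μ T (i+1) i) then swapVals (i-1) i T
  else T

/-- The index (1-based) of the run of `T` containing the value `v`: one plus the
number of inverse descents of the reading word of `T` that are smaller than `v`. -/
def runIdx (μ : YoungDiagram) (T : ℕ × ℕ → ℕ) (v : ℕ) : ℕ :=
  1 + ((Finset.Ico 1 v).filter (fun m => Precedes μ T (m+1) m)).card

/-- `b_j`, the largest value in the `j`-th run of `T`: the number of values in
`{1, …, n}` lying in the first `j` runs. -/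
def bsum (n : ℕ) (μ : YoungDiagram) (T : ℕ × ℕ → ℕ) (j : ℕ) : ℕ :=
  ((Finset.Icc 1 n).filter (fun v => runIdx μ T v ≤ j)).card

/-- `β_j(T)`, the size of the `j`-th run of `T`. -/
def betaRun (n : ℕ) (μ : YoungDiagram) (T : ℕ × ℕ → ℕ) (j : ℕ) : ℕ :=
  bsum n μ T j - bsum n μ T (j - 1)

/-- The first `j` runs of `T` form a superstandard tableau: every value `v` of the
first `j` runs lies in row `runIdx(v) - 1` (0-based; i.e. the `m`-th run fills the
`m`-th row from the bottom, in order). -/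
def FirstRunsSS (n : ℕ) (μ : YoungDiagram) (T : ℕ × ℕ → ℕ) (j : ℕ) : Prop :=
  ∀ v, 1 ≤ v → v ≤ n → runIdx μ T v ≤ j →
    ∀ c ∈ μ.cells, T c = v → c.1 = runIdx μ T v - 1

/-- `T` is the superstandard tableau `U_λ` of its shape: each run fills its row. -/
def IsSuperstandard (μ : YoungDiagram) (T : ℕ × ℕ → ℕ) : Prop :=
  ∀ c ∈ μ.cells, c.1 = runIdx μ T (T c) - 1

/-- `μ_r`, the number of cells in the `r`-th row (1-based) of the shape of the
first `j` runs of `T`. -/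
def shapeRow (μ : YoungDiagram) (T : ℕ × ℕ → ℕ) (j r : ℕ) : ℕ :=
  (μ.cells.filter (fun c => runIdx μ T (T c) ≤ j ∧ c.1 = r - 1)).card

/-- The cells of the `a`-th and `j`-th runs of `T` lying strictly below the `j`-th
row (1-based rows; row `j` has 0-based index `j - 1`). -/
def belowCells (μ : YoungDiagram) (T : ℕ × ℕ → ℕ) (a j : ℕ) : Finset (ℕ × ℕ) :=
  μ.cells.filter (fun c => (runIdx μ T (T c) = a ∨ runIdx μ T (T c) = j) ∧ c.1 + 1 < j)

/-- `T'` is obtained from `T` by permuting the cells of the `a`-th and `j`-th runs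
lying strictly below the `j`-th row, giving the first `k` of these cells (in row
reading order) to the `a`-th run and the rest to the `j`-th run; all other runs,
and the part of the `j`-th run weakly above the `j`-th row, keep their cells. -/
def Redistrib (μ : YoungDiagram) (T T' : ℕ × ℕ → ℕ) (a j k : ℕ) : Prop :=
  (∀ c ∈ μ.cells, runIdx μ T (T c) ≠ a → runIdx μ T (T c) ≠ j →
      runIdx μ T' (T' c) = runIdx μ T (T c)) ∧
  (∀ c ∈ μ.cells, runIdx μ T (T c) = j → j ≤ c.1 + 1 → runIdx μ T' (T' c) = j) ∧
  (∀ c ∈ belowCells μ T a j,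
      runIdx μ T' (T' c) =
        if ((belowCells μ T a j).filter
              (fun c' => c.1 < c'.1 ∨ (c'.1 = c.1 ∧ c'.2 < c.2))).card < k
        then a else j)

/-- The indices `i` and `j` from the definition of `slink` and `slink_*`:
`j` is minimal such that the first `j` runs of `T` do not form a superstandard
tableau, and `i` is minimal with `μ_{i+1} ≤ β_j(T) + i - j` (written additively to
avoid natural subtraction). -/
def SlinkData (n : ℕ) (μ : YoungDiagram) (T : ℕ × ℕ → ℕ) (i j : ℕ) : Prop :=
  1 ≤ j ∧ ¬ FirstRunsSS n μ T j ∧ (∀ j', j' < j → FirstRunsSS n μ T j') ∧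
  1 ≤ i ∧ shapeRow μ T j (i + 1) + j ≤ betaRun n μ T j + i ∧
  (∀ i', 1 ≤ i' → i' < i → betaRun n μ T j + i' < shapeRow μ T j (i' + 1) + j)

/-- `T' = slink_*(T)`: both are standard Young tableaux of a common shape; if `T`
is superstandard then `T' = T`, and otherwise `T'` is obtained by permuting the
cells of the `i`-th and `j`-th runs below the `j`-th row, giving the first
`β_j(T) + i - j` of them to the `i`-th run. -/
def SlinkStarRel (n : ℕ) (T T' : ℕ × ℕ → ℕ) : Prop :=
  ∃ μ : YoungDiagram, IsSYT n μ T ∧ IsSYT n μ T' ∧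
    ((IsSuperstandard μ T ∧ T' = T) ∨
     (¬ IsSuperstandard μ T ∧ ∃ i j, SlinkData n μ T i j ∧
        Redistrib μ T T' i j (betaRun n μ T j + i - j)))

/-- `T' = slink(T)`: both are standard Young tableaux of a common shape; if `T` is
superstandard then `T' = T`, and otherwise `T'` is obtained by permuting the cells
of the `(j-1)`-st and `j`-th runs below the `j`-th row, giving the first
`β_j(T) - 1` of them to the `(j-1)`-st run. -/
def SlinkRel (n : ℕ) (T T' : ℕ × ℕ → ℕ) : Prop :=
  ∃ μ : YoungDiagram, IsSYT n μ T ∧ IsSYT n μ T' ∧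
    ((IsSuperstandard μ T ∧ T' = T) ∨
     (¬ IsSuperstandard μ T ∧ ∃ i j, SlinkData n μ T i j ∧
        Redistrib μ T T' (j - 1) j (betaRun n μ T j - 1)))

/-!
`slink` and `slink_*` only move cells between runs, and a standard Young tableau is determined
by the run of each of its cells, so it suffices to compare run labels. The first `j - 1` runs
of `T` fill initial segments of the rows `0, …, j - 2`. From this one checks that `slink_*(T)`
has the same indices `i`, `j` as `T`, and that `slink(T)` has indices `i`, `j - 1` when
`i + 1 < j`. Then both composites cut the `i`-th run together with the part of the `j`-th run
below row `j`, taken in reading order, into three consecutive blocks: the first `β_j + i - j`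
cells go to run `i`, the next ones up to position `β_i + β_j - 1 - β_{j-1}` to run `j - 1`,
the rest to run `j`; every other cell keeps its run. When `i + 1 = j` the two maps coincide.
-/

open Finset

/-! ### Reading order -/

/-- The order of cells in the row reading word, as in `Precedes`. -/
def ReadsBefore (c c' : ℕ × ℕ) : Prop := c'.1 < c.1 ∨ (c.1 = c'.1 ∧ c.2 < c'.2)

lemma ReadsBefore.irrefl (c : ℕ × ℕ) : ¬ ReadsBefore c c := by
  rintro (h | ⟨-, h⟩) <;> exact lt_irrefl _ h

lemma ReadsBefore.trans {a b c : ℕ × ℕ} (h₁ : ReadsBefore a b) (h₂ : ReadsBefore b c) :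
    ReadsBefore a c := by
  unfold ReadsBefore at *
  omega

lemma ReadsBefore.asymm {c c' : ℕ × ℕ} (h : ReadsBefore c c') : ¬ ReadsBefore c' c :=
  fun h' => ReadsBefore.irrefl c (h.trans h')

lemma readsBefore_trichotomy (c c' : ℕ × ℕ) :
    ReadsBefore c c' ∨ c = c' ∨ ReadsBefore c' c := by
  unfold ReadsBefore
  rcases c with ⟨a, b⟩
  rcases c' with ⟨a', b'⟩
  simp only [Prod.mk.injEq]
  omega

def readRank (s : Finset (ℕ × ℕ)) (c : ℕ × ℕ) : ℕ := #{c' ∈ s | ReadsBefore c' c}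

def readPrefix (s : Finset (ℕ × ℕ)) (k : ℕ) : Finset (ℕ × ℕ) :=
  {c ∈ s | readRank s c < k}

def readSuffix (s : Finset (ℕ × ℕ)) (k : ℕ) : Finset (ℕ × ℕ) :=
  {c ∈ s | k ≤ readRank s c}

section ReadRank

variable {s : Finset (ℕ × ℕ)} {c c' : ℕ × ℕ} {k : ℕ}

lemma readRank_lt_readRank (hc : c ∈ s) (h : ReadsBefore c c') :
    readRank s c < readRank s c' := by
  refine card_lt_card ⟨fun d hd => ?_, fun hsub => ?_⟩
  · rw [mem_filter] at hd ⊢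
    exact ⟨hd.1, hd.2.trans h⟩
  · exact ReadsBefore.irrefl c (mem_filter.1 (hsub (mem_filter.2 ⟨hc, h⟩))).2

lemma readsBefore_of_readRank_lt (hc' : c' ∈ s) (h : readRank s c < readRank s c') :
    ReadsBefore c c' := by
  rcases readsBefore_trichotomy c c' with h' | rfl | h'
  · exact h'
  · exact absurd h (lt_irrefl _)
  · exact absurd h (readRank_lt_readRank hc' h').not_gt

lemma readRank_injOn : Set.InjOn (readRank s) s := by
  intro c hc c' hc' h
  rcases readsBefore_trichotomy c c' with h' | h' | h'
  · exact absurd h (readRank_lt_readRank hc h').ne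
  · exact h'
  · exact absurd h (readRank_lt_readRank hc' h').ne'

lemma readRank_lt_card (hc : c ∈ s) : readRank s c < #s := by
  refine card_lt_card ⟨filter_subset _ _, fun hsub => ?_⟩
  exact ReadsBefore.irrefl c (mem_filter.1 (hsub hc)).2

lemma image_readRank : s.image (readRank s) = range #s :=
  eq_of_subset_of_card_le
    (fun _ hv => by
      obtain ⟨c, hc, rfl⟩ := mem_image.1 hv
      exact mem_range.2 (readRank_lt_card hc))
    (by rw [card_range, card_image_of_injOn readRank_injOn])

lemma exists_readRank_eq (hk : k < #s) : ∃ c ∈ s, readRank s c = k :=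
  mem_image.1 (image_readRank ▸ mem_range.2 hk)

lemma card_readPrefix (s : Finset (ℕ × ℕ)) (k : ℕ) : #(readPrefix s k) = min k #s := by
  have himg : (readPrefix s k).image (readRank s) = range (min k #s) := by
    ext v
    simp only [readPrefix, mem_image, mem_filter, mem_range, lt_min_iff]
    constructor
    · rintro ⟨c, ⟨hc, hck⟩, rfl⟩
      exact ⟨hck, readRank_lt_card hc⟩
    · rintro ⟨h₁, h₂⟩
      obtain ⟨c, hc, rfl⟩ := exists_readRank_eq h₂
      exact ⟨c, ⟨hc, h₁⟩, rfl⟩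
  rw [← card_range (min k #s), ← himg,
    card_image_of_injOn (readRank_injOn.mono (s₂ := s) (filter_subset _ s))]

lemma card_readSuffix (s : Finset (ℕ × ℕ)) (k : ℕ) : #(readSuffix s k) = #s - k := by
  have h := card_filter_add_card_filter_not (s := s) (fun c => readRank s c < k)
  simp only [not_lt] at h
  rw [← readPrefix, card_readPrefix] at h
  unfold readSuffix
  omega

lemma readRank_readPrefix (hc : c ∈ readPrefix s k) :
    readRank (readPrefix s k) c = readRank s c := by
  have hc' := mem_filter.1 hc
  refine congrArg card (ext fun d => ?_)
  simp only [readPrefix, mem_filter, and_congr_left_iff, and_iff_left_iff_imp]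
  exact fun h hd => (readRank_lt_readRank hd h).trans hc'.2

lemma readRank_readSuffix (hc : c ∈ readSuffix s k) :
    readRank (readSuffix s k) c = readRank s c - k := by
  have hc' := mem_filter.1 hc
  have hsplit : {d ∈ s | ReadsBefore d c} =
      {d ∈ readSuffix s k | ReadsBefore d c} ∪ readPrefix s k := by
    ext d
    simp only [readSuffix, readPrefix, mem_filter, mem_union]
    constructor
    · rintro ⟨hd, h⟩
      by_cases hk : k ≤ readRank s d
      · exact Or.inl ⟨⟨hd, hk⟩, h⟩
      · exact Or.inr ⟨hd, by omega⟩
    · rintro (⟨⟨hd, -⟩, h⟩ | ⟨hd, hk⟩)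
      · exact ⟨hd, h⟩
      · exact ⟨hd, readsBefore_of_readRank_lt hc'.1 (by omega)⟩
  have hdisj : Disjoint {d ∈ readSuffix s k | ReadsBefore d c} (readPrefix s k) :=
    disjoint_left.2 fun d h₁ h₂ => by
      simp only [readSuffix, readPrefix, mem_filter] at h₁ h₂
      omega
  have hcard := congrArg card hsplit
  rw [card_union_of_disjoint hdisj, card_readPrefix,
    min_eq_left (hc'.2.trans (readRank_lt_card hc'.1).le)] at hcard
  unfold readRank
  omega

lemma readRank_eq_of_row_prefix (hrow : ∀ d ∈ s, d.1 ≤ c.1)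
    (hpre : ∀ y < c.2, (c.1, y) ∈ s) : readRank s c = c.2 := by
  have hset : {d ∈ s | ReadsBefore d c} = (range c.2).image (fun y => (c.1, y)) := by
    ext d
    simp only [mem_filter, mem_image, mem_range]
    constructor
    · rintro ⟨hd, h⟩
      have := hrow d hd
      unfold ReadsBefore at h
      exact ⟨d.2, by omega, Prod.ext (by omega) rfl⟩
    · rintro ⟨y, hy, rfl⟩
      exact ⟨hpre y hy, Or.inr ⟨rfl, hy⟩⟩
  rw [readRank, hset, card_image_of_injective _ (Prod.mk_right_injective c.1), card_range]

lemma readRank_union_of_readsBefore {P Q : Finset (ℕ × ℕ)} (hPQ : Disjoint P Q)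
    (hP : ∀ d ∈ P, ReadsBefore d c) : readRank (P ∪ Q) c = #P + readRank Q c := by
  rw [readRank, filter_union, filter_true_of_mem hP,
    card_union_of_disjoint (hPQ.mono_right (filter_subset _ _))]
  rfl

end ReadRank

/-! ### Runs of a standard Young tableau -/

def runCells (μ : YoungDiagram) (T : ℕ × ℕ → ℕ) (r : ℕ) : Finset (ℕ × ℕ) :=
  {c ∈ μ.cells | runIdx μ T (T c) = r}

lemma mem_runCells {μ : YoungDiagram} {T : ℕ × ℕ → ℕ} {r : ℕ} {c : ℕ × ℕ} :
    c ∈ runCells μ T r ↔ c ∈ μ.cells ∧ runIdx μ T (T c) = r :=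
  mem_filter

lemma le_card_filter_Icc_iff {n v : ℕ} {p : ℕ → Prop} [DecidablePred p] (hp : Antitone p)
    (h₁ : 1 ≤ v) (h₂ : v ≤ n) : p v ↔ v ≤ #{u ∈ Icc 1 n | p u} := by
  constructor
  · intro hv
    calc v = #(Icc 1 v) := by simp
      _ ≤ _ := card_le_card fun u hu => by
        rw [mem_Icc] at hu
        exact mem_filter.2 ⟨mem_Icc.2 ⟨hu.1, hu.2.trans h₂⟩, hp hu.2 hv⟩
  · intro hv
    by_contra hnv
    have hsub : {u ∈ Icc 1 n | p u} ⊆ Icc 1 (v - 1) := fun u hu => by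
      rw [mem_filter, mem_Icc] at hu
      exact mem_Icc.2 ⟨hu.1.1, by by_contra h; exact hnv (hp (by omega) hu.2)⟩
    have := card_le_card hsub
    simp only [Nat.card_Icc] at this
    omega

lemma mem_iff_lt_card_of_isLowerSet {s : Finset ℕ} (hs : IsLowerSet (s : Set ℕ)) {v : ℕ} :
    v ∈ s ↔ v < #s := by
  constructor
  · intro hv
    have := card_le_card (s := range (v + 1)) fun a ha => hs (Nat.lt_succ_iff.1 (mem_range.1 ha)) hv
    rw [card_range] at this
    omega
  · intro hv
    by_contra hnv
    have := card_le_card (t := range v) fun a ha =>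
      mem_range.2 (by by_contra h; exact hnv (hs (show v ≤ a by omega) ha))
    rw [card_range] at this
    omega

lemma runIdx_pos (μ : YoungDiagram) (T : ℕ × ℕ → ℕ) (v : ℕ) : 1 ≤ runIdx μ T v :=
  Nat.le_add_right 1 _

lemma runIdx_one (μ : YoungDiagram) (T : ℕ × ℕ → ℕ) : runIdx μ T 1 = 1 := by
  simp [runIdx]

lemma runIdx_mono (μ : YoungDiagram) (T : ℕ × ℕ → ℕ) : Monotone (runIdx μ T) := by
  intro a b h
  unfold runIdx
  gcongr

lemma runIdx_succ (μ : YoungDiagram) (T : ℕ × ℕ → ℕ) {v : ℕ} (hv : 1 ≤ v) :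
    runIdx μ T (v + 1) = runIdx μ T v + if Precedes μ T (v + 1) v then 1 else 0 := by
  have h : Ico 1 (v + 1) = insert v (Ico 1 v) := by
    ext x
    simp only [mem_Ico, mem_insert]
    omega
  unfold runIdx
  rw [h, filter_insert]
  split_ifs
  · rw [card_insert_of_notMem (by simp)]
    omega
  · rfl

lemma runIdx_le_iff {n : ℕ} {μ : YoungDiagram} {T : ℕ × ℕ → ℕ} {v : ℕ}
    (h₁ : 1 ≤ v) (h₂ : v ≤ n) (r : ℕ) : runIdx μ T v ≤ r ↔ v ≤ bsum n μ T r :=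
  le_card_filter_Icc_iff (fun _ _ hab hb => (runIdx_mono μ T hab).trans hb) h₁ h₂

lemma runIdx_eq_iff {n : ℕ} {μ : YoungDiagram} {T : ℕ × ℕ → ℕ} {v : ℕ}
    (h₁ : 1 ≤ v) (h₂ : v ≤ n) {r : ℕ} (hr : 1 ≤ r) :
    runIdx μ T v = r ↔ bsum n μ T (r - 1) < v ∧ v ≤ bsum n μ T r := by
  rw [← runIdx_le_iff h₁ h₂, lt_iff_not_ge, ← runIdx_le_iff h₁ h₂]
  omega

namespace IsSYT

variable {n : ℕ} {μ : YoungDiagram} {T : ℕ × ℕ → ℕ} {c c' : ℕ × ℕ}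

lemma one_le_apply (hT : IsSYT n μ T) (hc : c ∈ μ.cells) : 1 ≤ T c := (hT.2.1.mapsTo hc).1

lemma apply_le (hT : IsSYT n μ T) (hc : c ∈ μ.cells) : T c ≤ n := (hT.2.1.mapsTo hc).2

lemma exists_apply_eq (hT : IsSYT n μ T) {v : ℕ} (h₁ : 1 ≤ v) (h₂ : v ≤ n) :
    ∃ c ∈ μ.cells, T c = v :=
  hT.2.1.surjOn (Set.mem_Icc.2 ⟨h₁, h₂⟩)

lemma inj (hT : IsSYT n μ T) (hc : c ∈ μ.cells) (hc' : c' ∈ μ.cells) (h : T c = T c') :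
    c = c' :=
  hT.2.1.injOn hc hc' h

lemma apply_eq_zero (hT : IsSYT n μ T) (hc : c ∉ μ.cells) : T c = 0 :=
  hT.1 c (by rwa [← YoungDiagram.mem_cells])

lemma precedes_iff (hT : IsSYT n μ T) (hc : c ∈ μ.cells) (hc' : c' ∈ μ.cells) :
    Precedes μ T (T c) (T c') ↔ ReadsBefore c c' := by
  constructor
  · rintro ⟨d, hd, d', hd', h, h', hlt⟩
    rwa [hT.inj hd hc h, hT.inj hd' hc' h'] at hlt
  · exact fun h => ⟨c, hc, c', hc', rfl, rfl, h⟩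

lemma shape_eq {μ' : YoungDiagram} (h : IsSYT n μ T) (h' : IsSYT n μ' T) : μ = μ' := by
  refine YoungDiagram.ext (Finset.ext fun c => ⟨fun hc => ?_, fun hc => ?_⟩)
  · by_contra hc'
    have := h.one_le_apply hc
    rw [h'.apply_eq_zero hc'] at this
    omega
  · by_contra hc'
    have := h'.one_le_apply hc
    rw [h.apply_eq_zero hc'] at this
    omega

lemma readsBefore_of_succ (hT : IsSYT n μ T) (hc : c ∈ μ.cells) (hc' : c' ∈ μ.cells)
    (hv : T c' = T c + 1) (hr : runIdx μ T (T c) = runIdx μ T (T c')) : ReadsBefore c c' := by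
  have hnp : ¬ ReadsBefore c' c := by
    rw [← hT.precedes_iff hc' hc]
    intro hp
    rw [hv, runIdx_succ μ T (hT.one_le_apply hc), if_pos (hv ▸ hp)] at hr
    omega
  rcases readsBefore_trichotomy c c' with h | rfl | h
  · exact h
  · omega
  · exact absurd h hnp

lemma readsBefore_of_lt (hT : IsSYT n μ T) (hc : c ∈ μ.cells) (hc' : c' ∈ μ.cells)
    (hlt : T c < T c') (hr : runIdx μ T (T c) = runIdx μ T (T c')) : ReadsBefore c c' := by
  obtain ⟨d, hd⟩ : ∃ d, T c' = T c + 1 + d := ⟨T c' - T c - 1, by omega⟩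
  induction d generalizing c' with
  | zero => exact hT.readsBefore_of_succ hc hc' hd hr
  | succ d ih =>
    obtain ⟨e, he, hev⟩ := hT.exists_apply_eq (v := T c + 1 + d) (by omega)
      (by have := hT.apply_le hc'; omega)
    have hre : runIdx μ T (T c) = runIdx μ T (T e) := le_antisymm
      (runIdx_mono μ T (by omega)) (hr ▸ runIdx_mono μ T (by omega))
    exact (ih he (by omega) hre hev).trans
      (hT.readsBefore_of_succ he hc' (by omega) (by rw [← hre, hr]))

lemma lt_of_readsBefore (hT : IsSYT n μ T) (hc : c ∈ μ.cells) (hc' : c' ∈ μ.cells)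
    (h : ReadsBefore c c') (hr : runIdx μ T (T c) = runIdx μ T (T c')) : T c < T c' := by
  rcases lt_trichotomy (T c) (T c') with hlt | heq | hgt
  · exact hlt
  · exact absurd h (hT.inj hc hc' heq ▸ ReadsBefore.irrefl c)
  · exact absurd (hT.readsBefore_of_lt hc' hc hgt hr.symm) h.asymm

lemma bsum_eq_card (hT : IsSYT n μ T) (r : ℕ) :
    bsum n μ T r = #{c ∈ μ.cells | runIdx μ T (T c) ≤ r} := by
  symm
  refine card_bij (fun c _ => T c) (fun c hc => ?_) (fun c hc c' hc' h => ?_) (fun v hv => ?_)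
  · rw [mem_filter] at hc ⊢
    exact ⟨mem_Icc.2 ⟨hT.one_le_apply hc.1, hT.apply_le hc.1⟩, hc.2⟩
  · exact hT.inj (mem_filter.1 hc).1 (mem_filter.1 hc').1 h
  · rw [mem_filter, mem_Icc] at hv
    obtain ⟨c, hc, rfl⟩ := hT.exists_apply_eq hv.1.1 hv.1.2
    exact ⟨c, mem_filter.2 ⟨hc, hv.2⟩, rfl⟩

lemma betaRun_eq_card (hT : IsSYT n μ T) {r : ℕ} (hr : 1 ≤ r) :
    betaRun n μ T r = #(runCells μ T r) := by
  have hsplit : {c ∈ μ.cells | runIdx μ T (T c) ≤ r} =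
      runCells μ T r ∪ {c ∈ μ.cells | runIdx μ T (T c) ≤ r - 1} := by
    rw [runCells, ← filter_or]
    exact filter_congr fun c _ => by omega
  have hdisj : Disjoint (runCells μ T r) {c ∈ μ.cells | runIdx μ T (T c) ≤ r - 1} :=
    disjoint_left.2 fun c h₁ h₂ => by
      rw [mem_runCells] at h₁
      rw [mem_filter] at h₂
      omega
  rw [betaRun, hT.bsum_eq_card, hT.bsum_eq_card, hsplit, card_union_of_disjoint hdisj]
  omega

lemma eq_bsum_add_readRank (hT : IsSYT n μ T) (hc : c ∈ μ.cells) :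
    T c = bsum n μ T (runIdx μ T (T c) - 1) + 1 +
      readRank (runCells μ T (runIdx μ T (T c))) c := by
  have hrun : ∀ {d}, d ∈ μ.cells → (runIdx μ T (T d) = runIdx μ T (T c) ↔
      bsum n μ T (runIdx μ T (T c) - 1) < T d ∧ T d ≤ bsum n μ T (runIdx μ T (T c))) :=
    fun hd => runIdx_eq_iff (hT.one_le_apply hd) (hT.apply_le hd) (runIdx_pos μ T (T c))
  have hb := (hrun hc).1 rfl
  have hcard : readRank (runCells μ T (runIdx μ T (T c))) c =
      #(Ico (bsum n μ T (runIdx μ T (T c) - 1) + 1) (T c)) := by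
    refine card_bij (fun c _ => T c) (fun d hd => ?_) (fun d hd d' hd' h => ?_) (fun v hv => ?_)
    · rw [mem_filter, mem_runCells] at hd
      have := (hrun hd.1.1).1 hd.1.2
      have := hT.lt_of_readsBefore hd.1.1 hc hd.2 hd.1.2
      exact mem_Ico.2 ⟨by omega, by omega⟩
    · exact hT.inj (mem_runCells.1 (mem_filter.1 hd).1).1 (mem_runCells.1 (mem_filter.1 hd').1).1 h
    · rw [mem_Ico] at hv
      obtain ⟨d, hd, rfl⟩ := hT.exists_apply_eq (v := v) (by omega)
        (by have := hT.apply_le hc; omega)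
      have hdr := (hrun hd).2 ⟨by omega, by omega⟩
      exact ⟨d, mem_filter.2 ⟨mem_runCells.2 ⟨hd, hdr⟩,
        hT.readsBefore_of_lt hd hc hv.2 hdr⟩, rfl⟩
  rw [hcard, Nat.card_Ico]
  omega

lemma ext_runIdx {S : ℕ × ℕ → ℕ} (hT : IsSYT n μ T) (hS : IsSYT n μ S)
    (h : ∀ c ∈ μ.cells, runIdx μ T (T c) = runIdx μ S (S c)) : T = S := by
  have hruns : ∀ r, runCells μ T r = runCells μ S r := fun r =>
    filter_congr fun c hc => by rw [h c hc]
  have hbsum : ∀ r, bsum n μ T r = bsum n μ S r := fun r => by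
    rw [hT.bsum_eq_card, hS.bsum_eq_card]
    exact congrArg card (filter_congr fun c hc => by rw [h c hc])
  funext c
  by_cases hc : c ∈ μ.cells
  · rw [hT.eq_bsum_add_readRank hc, hS.eq_bsum_add_readRank hc, h c hc, hbsum, hruns]
  · rw [hT.apply_eq_zero hc, hS.apply_eq_zero hc]

lemma lt_of_lt_fst (hT : IsSYT n μ T) {r r' y : ℕ} (h : r < r') (hmem : (r', y) ∈ μ.cells) :
    T (r, y) < T (r', y) := by
  induction r', h using Nat.le_induction with
  | base => exact hT.2.2.2 r y hmem
  | succ r' hr ih =>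
    exact (ih (μ.up_left_mem (Nat.le_succ r') le_rfl hmem)).trans (hT.2.2.2 r' y hmem)

lemma lt_of_lt_snd (hT : IsSYT n μ T) {r y y' : ℕ} (h : y < y') (hmem : (r, y') ∈ μ.cells) :
    T (r, y) < T (r, y') := by
  induction y', h using Nat.le_induction with
  | base => exact hT.2.2.1 r y hmem
  | succ y' hy ih =>
    exact (ih (μ.up_left_mem le_rfl (Nat.le_succ y') hmem)).trans (hT.2.2.1 r y' hmem)

lemma runIdx_lt_of_lt_fst (hT : IsSYT n μ T) {r r' y : ℕ} (h : r < r')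
    (hmem : (r', y) ∈ μ.cells) :
    runIdx μ T (T (r, y)) < runIdx μ T (T (r', y)) := by
  have hlt := hT.lt_of_lt_fst h hmem
  refine lt_of_le_of_ne (runIdx_mono μ T hlt.le) fun hr => ?_
  have := hT.readsBefore_of_lt (μ.up_left_mem h.le le_rfl hmem) hmem hlt hr
  unfold ReadsBefore at this
  omega

lemma runIdx_le_of_le_snd (hT : IsSYT n μ T) {r y y' : ℕ} (h : y ≤ y')
    (hmem : (r, y') ∈ μ.cells) :
    runIdx μ T (T (r, y)) ≤ runIdx μ T (T (r, y')) := by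
  rcases h.lt_or_eq with h | rfl
  · exact runIdx_mono μ T (hT.lt_of_lt_snd h hmem).le
  · exact le_rfl

lemma runCells_nonempty (hT : IsSYT n μ T) {r : ℕ} (hr : 1 ≤ r) (hc : c ∈ μ.cells)
    (hle : r ≤ runIdx μ T (T c)) : (runCells μ T r).Nonempty := by
  have hex : ∃ v, 1 ≤ v ∧ r ≤ runIdx μ T v := ⟨T c, hT.one_le_apply hc, hle⟩
  obtain ⟨hv₁, hvr⟩ := Nat.find_spec hex
  have hvc : Nat.find hex ≤ T c := Nat.find_min' hex ⟨hT.one_le_apply hc, hle⟩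
  have hveq : runIdx μ T (Nat.find hex) = r := by
    rcases hv₁.lt_or_eq with hv | hv
    · have hprev := Nat.find_min hex (show Nat.find hex - 1 < Nat.find hex by omega)
      have hsucc := runIdx_succ μ T (show 1 ≤ Nat.find hex - 1 by omega)
      rw [Nat.sub_add_cancel hv₁] at hsucc
      split_ifs at hsucc <;> omega
    · have := runIdx_one μ T
      rw [← hv] at hvr ⊢
      omega
  obtain ⟨d, hd, hdv⟩ := hT.exists_apply_eq hv₁ (hvc.trans (hT.apply_le hc))
  exact ⟨d, mem_runCells.2 ⟨hd, hdv ▸ hveq⟩⟩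

lemma firstRunsSS_iff (hT : IsSYT n μ T) {t : ℕ} : FirstRunsSS n μ T t ↔
    ∀ c ∈ μ.cells, runIdx μ T (T c) ≤ t → c.1 = runIdx μ T (T c) - 1 :=
  ⟨fun h c hc hr => h (T c) (hT.one_le_apply hc) (hT.apply_le hc) hr c hc rfl,
    fun h _ _ _ hr c hc hv => hv ▸ h c hc (hv ▸ hr)⟩

lemma firstRunsSS_one (hT : IsSYT n μ T) : FirstRunsSS n μ T 1 := by
  rw [hT.firstRunsSS_iff]
  rintro ⟨a, b⟩ hc hr
  have hr₁ : runIdx μ T (T (a, b)) = 1 := le_antisymm hr (runIdx_pos μ T _)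
  rw [hr₁]
  by_contra ha
  have := hT.runIdx_lt_of_lt_fst (r' := a) (Nat.pos_of_ne_zero ha) hc
  have := runIdx_pos μ T (T (0, b))
  omega

end IsSYT

lemma IsSuperstandard.firstRunsSS {n : ℕ} {μ : YoungDiagram} {T : ℕ × ℕ → ℕ}
    (h : IsSuperstandard μ T) (t : ℕ) : FirstRunsSS n μ T t :=
  fun _ _ _ _ c hc hv => hv ▸ h c hc

lemma SlinkData.unique {n : ℕ} {μ : YoungDiagram} {T : ℕ × ℕ → ℕ} {i j i' j' : ℕ}
    (h : SlinkData n μ T i j) (h' : SlinkData n μ T i' j') : i = i' ∧ j = j' := by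
  obtain ⟨-, hns, hmin, hi, hcond, himin⟩ := h
  obtain ⟨-, hns', hmin', hi', hcond', himin'⟩ := h'
  obtain rfl : j = j' := by
    rcases lt_trichotomy j j' with h | h | h
    · exact absurd (hmin' j h) hns
    · exact h
    · exact absurd (hmin j' h) hns'
  refine ⟨?_, rfl⟩
  rcases lt_trichotomy i i' with h | h | h
  · have := himin' i hi h
    omega
  · exact h
  · have := himin i' hi' h
    omega

/-! ### Redistributing two runs -/

def runCellsBelow (μ : YoungDiagram) (T : ℕ × ℕ → ℕ) (j : ℕ) : Finset (ℕ × ℕ) :=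
  {c ∈ runCells μ T j | c.1 + 1 < j}

def runCellsAbove (μ : YoungDiagram) (T : ℕ × ℕ → ℕ) (j : ℕ) : Finset (ℕ × ℕ) :=
  {c ∈ runCells μ T j | j ≤ c.1 + 1}

section BelowCells

variable {μ : YoungDiagram} {T T' : ℕ × ℕ → ℕ} {a j k : ℕ} {c : ℕ × ℕ}

lemma mem_belowCells : c ∈ belowCells μ T a j ↔
    c ∈ μ.cells ∧ (runIdx μ T (T c) = a ∨ runIdx μ T (T c) = j) ∧ c.1 + 1 < j :=
  mem_filter

lemma mem_runCellsBelow : c ∈ runCellsBelow μ T j ↔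
    c ∈ μ.cells ∧ runIdx μ T (T c) = j ∧ c.1 + 1 < j := by
  rw [runCellsBelow, mem_filter, mem_runCells, and_assoc]

lemma mem_runCellsAbove : c ∈ runCellsAbove μ T j ↔
    c ∈ μ.cells ∧ runIdx μ T (T c) = j ∧ j ≤ c.1 + 1 := by
  rw [runCellsAbove, mem_filter, mem_runCells, and_assoc]

lemma card_runCells_eq_add :
    #(runCells μ T j) = #(runCellsBelow μ T j) + #(runCellsAbove μ T j) := by
  rw [← card_filter_add_card_filter_not (fun c : ℕ × ℕ => c.1 + 1 < j)]
  simp only [not_lt]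
  rfl

lemma belowCells_eq_union (hcov : ∀ c ∈ runCells μ T a, c.1 + 1 < j) :
    belowCells μ T a j = runCells μ T a ∪ runCellsBelow μ T j := by
  ext c
  rw [mem_belowCells, mem_union, mem_runCells, mem_runCellsBelow]
  constructor
  · rintro ⟨hc, ha | hj, hrow⟩
    exacts [Or.inl ⟨hc, ha⟩, Or.inr ⟨hc, hj, hrow⟩]
  · rintro (⟨hc, ha⟩ | ⟨hc, hj, hrow⟩)
    exacts [⟨hc, Or.inl ha, hcov c (mem_runCells.2 ⟨hc, ha⟩)⟩, ⟨hc, Or.inr hj, hrow⟩]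

lemma disjoint_runCells_runCellsBelow (haj : a ≠ j) :
    Disjoint (runCells μ T a) (runCellsBelow μ T j) :=
  disjoint_left.2 fun _ h h' => haj ((mem_runCells.1 h).2.symm.trans (mem_runCellsBelow.1 h').2.1)

namespace Redistrib

variable (h : Redistrib μ T T' a j k) (hcov : ∀ c ∈ runCells μ T a, c.1 + 1 < j)
include h hcov

lemma runIdx_eq (hc : c ∈ μ.cells) :
    runIdx μ T' (T' c) = if c ∈ belowCells μ T a j then
      (if readRank (belowCells μ T a j) c < k then a else j) else runIdx μ T (T c) := by
  by_cases hb : c ∈ belowCells μ T a j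
  · rw [if_pos hb, h.2.2 c hb, readRank]
    congr 3
    exact filter_congr fun _ _ => Iff.rfl
  · rw [if_neg hb, mem_belowCells] at *
    by_cases ha : runIdx μ T (T c) = a
    · exact absurd ⟨hc, Or.inl ha, hcov c (mem_runCells.2 ⟨hc, ha⟩)⟩ hb
    by_cases hj : runIdx μ T (T c) = j
    · exact hj ▸ h.2.1 c hc hj (by by_contra hlt; exact hb ⟨hc, Or.inr hj, by omega⟩)
    · exact h.1 c hc ha hj

lemma runCells_of_ne {r : ℕ} (ha : r ≠ a) (hj : r ≠ j) :
    runCells μ T' r = runCells μ T r := by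
  refine filter_congr fun c hc => ?_
  rw [h.runIdx_eq hcov hc]
  split_ifs with hb <;> simp only [mem_belowCells] at hb <;> omega

lemma runCells_left (haj : a ≠ j) : runCells μ T' a = readPrefix (belowCells μ T a j) k := by
  ext c
  rw [mem_runCells, readPrefix, mem_filter]
  constructor
  · rintro ⟨hc, hca⟩
    rw [h.runIdx_eq hcov hc] at hca
    split_ifs at hca with hb hk
    · exact ⟨hb, hk⟩
    · exact absurd hca.symm haj
    · exact absurd ⟨hc, Or.inl hca, hcov c (mem_runCells.2 ⟨hc, hca⟩)⟩
        (mem_belowCells.not.1 hb)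
  · rintro ⟨hb, hk⟩
    have hc := (mem_belowCells.1 hb).1
    rw [h.runIdx_eq hcov hc, if_pos hb, if_pos hk]
    exact ⟨hc, rfl⟩

lemma runCells_right (haj : a ≠ j) :
    runCells μ T' j = runCellsAbove μ T j ∪ readSuffix (belowCells μ T a j) k := by
  ext c
  rw [mem_runCells, mem_union, mem_runCellsAbove, readSuffix, mem_filter]
  constructor
  · rintro ⟨hc, hcj⟩
    rw [h.runIdx_eq hcov hc] at hcj
    split_ifs at hcj with hb hk
    · exact absurd hcj haj
    · exact Or.inr ⟨hb, by omega⟩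
    · refine Or.inl ⟨hc, hcj, ?_⟩
      by_contra hlt
      exact mem_belowCells.not.1 hb ⟨hc, Or.inr hcj, by omega⟩
  · rintro (⟨hc, hcj, hrow⟩ | ⟨hb, hk⟩)
    · refine ⟨hc, ?_⟩
      rw [h.runIdx_eq hcov hc, if_neg fun hb => by have := (mem_belowCells.1 hb).2.2; omega]
      exact hcj
    · have hc := (mem_belowCells.1 hb).1
      rw [h.runIdx_eq hcov hc, if_pos hb, if_neg (by omega)]
      exact ⟨hc, rfl⟩

lemma runCellsBelow_right (haj : a ≠ j) :
    runCellsBelow μ T' j = readSuffix (belowCells μ T a j) k := by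
  ext c
  rw [runCellsBelow, mem_filter, h.runCells_right hcov haj, mem_union, mem_runCellsAbove]
  constructor
  · rintro ⟨⟨-, -, hrow⟩ | hs, hlt⟩
    · omega
    · exact hs
  · exact fun hs => ⟨Or.inr hs, (mem_belowCells.1 (mem_filter.1 hs).1).2.2⟩

lemma filter_runIdx_le (haj : a ≤ j) :
    {c ∈ μ.cells | runIdx μ T' (T' c) ≤ j} = {c ∈ μ.cells | runIdx μ T (T c) ≤ j} := by
  refine filter_congr fun c hc => ?_
  rw [h.runIdx_eq hcov hc]
  split_ifs with hb <;> simp only [mem_belowCells] at hb <;> omega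

lemma shapeRow_eq (haj : a ≤ j) (r : ℕ) : shapeRow μ T' j r = shapeRow μ T j r := by
  simp only [shapeRow, ← filter_filter, h.filter_runIdx_le hcov haj]

lemma eq {n : ℕ} {T'' : ℕ × ℕ → ℕ} (hT' : IsSYT n μ T') (hT'' : IsSYT n μ T'')
    (h' : Redistrib μ T T'' a j k) : T' = T'' :=
  hT'.ext_runIdx hT'' fun _ hc => (h.runIdx_eq hcov hc).trans (h'.runIdx_eq hcov hc).symm

end Redistrib

end BelowCells

/-! ### The first `j` runs of `T` -/

lemma IsSYT.runIdx_eq_iff_of_firstRunsSS {n : ℕ} {μ : YoungDiagram} {T : ℕ × ℕ → ℕ}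
    {t r : ℕ} {c : ℕ × ℕ} (hT : IsSYT n μ T) (hss : FirstRunsSS n μ T t) (hr : 1 ≤ r)
    (hrt : r ≤ t) (hc : c ∈ μ.cells) :
    runIdx μ T (T c) = r ↔ c.1 = r - 1 ∧ c.2 < betaRun n μ T r := by
  rw [hT.firstRunsSS_iff] at hss
  have hrow : ∀ d ∈ runCells μ T r, d.1 = r - 1 := fun d hd => by
    rw [mem_runCells] at hd
    rw [hss d hd.1 (by omega), hd.2]
  set s := (runCells μ T r).image Prod.snd
  have hs : IsLowerSet (s : Set ℕ) := by
    intro b a hab hb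
    obtain ⟨d, hd, rfl⟩ := mem_image.1 hb
    have hdr := hrow d hd
    have hmem : (d.1, d.2) ∈ μ := (mem_runCells.1 hd).1
    have hle := hT.runIdx_le_of_le_snd hab hmem
    rw [(mem_runCells.1 hd).2] at hle
    have ha : d.1 = runIdx μ T (T (d.1, a)) - 1 :=
      hss (d.1, a) (μ.up_left_mem le_rfl hab hmem) (by omega)
    have := runIdx_pos μ T (T (d.1, a))
    exact mem_image.2
      ⟨(d.1, a), mem_runCells.2 ⟨μ.up_left_mem le_rfl hab hmem, by omega⟩, rfl⟩
  have hcard : #s = betaRun n μ T r := by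
    rw [hT.betaRun_eq_card hr]
    exact card_image_of_injOn fun d hd d' hd' h =>
      Prod.ext ((hrow d hd).trans (hrow d' hd').symm) h
  constructor
  · intro hcr
    have hcs : c.2 ∈ s := mem_image.2 ⟨c, mem_runCells.2 ⟨hc, hcr⟩, rfl⟩
    exact ⟨hrow c (mem_runCells.2 ⟨hc, hcr⟩),
      hcard ▸ (mem_iff_lt_card_of_isLowerSet hs).1 hcs⟩
  · rintro ⟨h₁, h₂⟩
    obtain ⟨d, hd, hd₂⟩ := mem_image.1 ((mem_iff_lt_card_of_isLowerSet hs).2 (hcard ▸ h₂))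
    rw [← (Prod.ext ((hrow d hd).trans h₁.symm) hd₂ : d = c)]
    exact (mem_runCells.1 hd).2

lemma IsSYT.runCells_eq_image_of_firstRunsSS {n : ℕ} {μ : YoungDiagram} {T : ℕ × ℕ → ℕ}
    {t r : ℕ} (hT : IsSYT n μ T) (hss : FirstRunsSS n μ T t) (hr : 1 ≤ r) (hrt : r ≤ t) :
    runCells μ T r = (range (betaRun n μ T r)).image (fun y => (r - 1, y)) := by
  have hsub : runCells μ T r ⊆ (range (betaRun n μ T r)).image (fun y => (r - 1, y)) :=
    fun c hc => by
      have hc' := mem_runCells.1 hc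
      have := (hT.runIdx_eq_iff_of_firstRunsSS hss hr hrt hc'.1).1 hc'.2
      exact mem_image.2 ⟨c.2, mem_range.2 this.2, Prod.ext this.1.symm rfl⟩
  refine eq_of_subset_of_card_le hsub ?_
  rw [card_image_of_injective _ (Prod.mk_right_injective _), card_range, hT.betaRun_eq_card hr]

namespace SlinkData

variable {n : ℕ} {μ : YoungDiagram} {T : ℕ × ℕ → ℕ} {i j : ℕ} {c : ℕ × ℕ}
variable (hd : SlinkData n μ T i j)

section
include hd

lemma one_le_i : 1 ≤ i := hd.2.2.2.1

lemma shapeRow_add_le : shapeRow μ T j (i + 1) + j ≤ betaRun n μ T j + i := hd.2.2.2.2.1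

lemma lt_shapeRow_add {i' : ℕ} (h₁ : 1 ≤ i') (h₂ : i' < i) :
    betaRun n μ T j + i' < shapeRow μ T j (i' + 1) + j :=
  hd.2.2.2.2.2 i' h₁ h₂

end

variable (hT : IsSYT n μ T)
include hd hT

lemma two_le_j : 2 ≤ j := by
  by_contra h
  obtain rfl : j = 1 := by have := hd.1; omega
  exact hd.2.1 hT.firstRunsSS_one

lemma firstRunsSS_pred : FirstRunsSS n μ T (j - 1) :=
  hd.2.2.1 (j - 1) (by have := hd.two_le_j hT; omega)

lemma runIdx_eq_iff {r : ℕ} (hr : 1 ≤ r) (hrj : r < j) (hc : c ∈ μ.cells) :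
    runIdx μ T (T c) = r ↔ c.1 = r - 1 ∧ c.2 < betaRun n μ T r :=
  hT.runIdx_eq_iff_of_firstRunsSS (hd.firstRunsSS_pred hT) hr (by omega) hc

lemma runIdx_lt_iff (hc : c ∈ μ.cells) :
    runIdx μ T (T c) < j ↔ c.1 + 1 < j ∧ c.2 < betaRun n μ T (c.1 + 1) := by
  have hpos := runIdx_pos μ T (T c)
  constructor
  · intro h
    have := (hd.runIdx_eq_iff hT hpos h hc).1 rfl
    rw [show c.1 + 1 = runIdx μ T (T c) by omega]
    exact ⟨h, this.2⟩
  · rintro ⟨h₁, h₂⟩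
    rw [(hd.runIdx_eq_iff hT (by omega) h₁ hc).2 ⟨rfl, h₂⟩]
    exact h₁

lemma one_le_betaRun {r : ℕ} (hr : 1 ≤ r) (hrj : r ≤ j) : 1 ≤ betaRun n μ T r := by
  obtain ⟨c, hc, hcj⟩ : ∃ c ∈ μ.cells, runIdx μ T (T c) = j := by
    by_contra! h
    refine hd.2.1 (hT.firstRunsSS_iff.2 fun c hc hcj => ?_)
    exact hT.firstRunsSS_iff.1 (hd.firstRunsSS_pred hT) c hc (by have := h c hc; omega)
  rw [hT.betaRun_eq_card hr]
  exact card_pos.2 (hT.runCells_nonempty hr hc (by omega))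

lemma mem_runCells_of_lt {r y : ℕ} (hr : 1 ≤ r) (hrj : r < j) (hy : y < betaRun n μ T r) :
    (r - 1, y) ∈ runCells μ T r := by
  rw [hT.runCells_eq_image_of_firstRunsSS (hd.firstRunsSS_pred hT) hr (by omega)]
  exact mem_image.2 ⟨y, mem_range.2 hy, rfl⟩

lemma betaRun_antitone {r r' : ℕ} (hr : 1 ≤ r) (hrr : r ≤ r') (hrj : r' < j) :
    betaRun n μ T r' ≤ betaRun n μ T r := by
  rcases hrr.lt_or_eq with hrr | rfl
  · have hb := hd.one_le_betaRun hT (show 1 ≤ r' by omega) hrj.le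
    have hc := mem_runCells.1 (hd.mem_runCells_of_lt hT (show 1 ≤ r' by omega) hrj
      (show betaRun n μ T r' - 1 < _ by omega))
    have hlt := hT.runIdx_lt_of_lt_fst (show r - 1 < r' - 1 by omega) hc.1
    rw [hc.2] at hlt
    have := ((hd.runIdx_lt_iff hT
      (μ.up_left_mem (show r - 1 ≤ r' - 1 by omega) le_rfl hc.1)).1 (by omega)).2
    rw [show r - 1 + 1 = r by omega] at this
    omega
  · exact le_rfl

lemma fst_eq_of_mem_runCellsAbove (hc : c ∈ runCellsAbove μ T j) : c.1 = j - 1 := by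
  obtain ⟨hc, hcj, hrow⟩ := mem_runCellsAbove.1 hc
  by_contra hne
  have hlt := hT.runIdx_lt_of_lt_fst (show j - 1 < c.1 by omega) hc
  have := (hd.runIdx_lt_iff hT (μ.up_left_mem (show j - 1 ≤ c.1 by omega) le_rfl hc)).1
    (by rw [hcj] at hlt; exact hlt)
  omega

lemma shapeRow_succ_le {r : ℕ} (hr : 1 ≤ r) :
    shapeRow μ T j (r + 1) ≤ betaRun n μ T r := by
  refine (card_le_card_of_injOn Prod.snd (t := range (betaRun n μ T r)) ?_ ?_).trans
    (card_range _).le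
  · rintro ⟨a, b⟩ hc
    simp only [coe_filter, Set.mem_ofPred_eq] at hc
    obtain ⟨hc, hcj, hrow⟩ := hc
    have hlt := hT.runIdx_lt_of_lt_fst (show r - 1 < a by omega) hc
    have := ((hd.runIdx_lt_iff hT (μ.up_left_mem (show r - 1 ≤ a by omega) le_rfl hc)).1
      (by omega)).2
    rw [show r - 1 + 1 = r by omega] at this
    exact mem_coe.2 (mem_range.2 this)
  · intro c hc c' hc' h
    simp only [coe_filter, Set.mem_ofPred_eq] at hc hc'
    exact Prod.ext (by omega) h

lemma betaRun_le_shapeRow {r : ℕ} (hr : 1 ≤ r) (hrj : r < j) :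
    betaRun n μ T r ≤ shapeRow μ T j r := by
  rw [hT.betaRun_eq_card hr]
  refine card_le_card fun c hc => ?_
  have hc := mem_runCells.1 hc
  have := (hd.runIdx_eq_iff hT hr hrj hc.1).1 hc.2
  exact mem_filter.2 ⟨hc.1, by omega, this.1⟩

lemma card_runCellsAbove_le {r : ℕ} (hr : 1 ≤ r) (hrj : r < j) :
    #(runCellsAbove μ T j) ≤ betaRun n μ T r := by
  have hj := hd.two_le_j hT
  calc #(runCellsAbove μ T j) ≤ shapeRow μ T j (j - 1 + 1) := card_le_card fun c hc => by
        have hrow := hd.fst_eq_of_mem_runCellsAbove hT hc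
        have hc := mem_runCellsAbove.1 hc
        exact mem_filter.2 ⟨hc.1, by omega, by omega⟩
    _ ≤ betaRun n μ T (j - 1) := hd.shapeRow_succ_le hT (by omega)
    _ ≤ betaRun n μ T r := hd.betaRun_antitone hT hr (by omega) (by omega)

lemma i_lt_j : i < j := by
  have hj := hd.two_le_j hT
  by_contra hij
  have hmin := hd.lt_shapeRow_add (i' := j - 1) (by omega) (by omega)
  rw [Nat.sub_add_cancel (by omega : 1 ≤ j)] at hmin
  have hsub : {c ∈ μ.cells | runIdx μ T (T c) ≤ j ∧ c.1 = j - 1} ⊆ runCells μ T j :=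
    fun c hc => by
      rw [mem_filter] at hc
      have := (hd.runIdx_lt_iff hT hc.1).not.2 (by omega)
      exact mem_runCells.2 ⟨hc.1, by omega⟩
  have heq := eq_of_subset_of_card_le hsub
    (by rw [← hT.betaRun_eq_card (by omega)]; unfold shapeRow at hmin; omega)
  refine hd.2.1 (hT.firstRunsSS_iff.2 fun c hc hcj => ?_)
  rcases (le_iff_lt_or_eq.1 hcj) with hlt | hcj
  · exact hT.firstRunsSS_iff.1 (hd.firstRunsSS_pred hT) c hc (by omega)
  · rw [hcj]
    exact (mem_filter.1 (heq ▸ mem_runCells.2 ⟨hc, hcj⟩)).2.2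

lemma fst_add_one_lt_of_mem_runCells {r : ℕ} (hr : 1 ≤ r) (hrj : r < j)
    (hc : c ∈ runCells μ T r) : c.1 + 1 < j := by
  have := (hd.runIdx_eq_iff hT hr hrj (mem_runCells.1 hc).1).1 (mem_runCells.1 hc).2
  omega

lemma belowCells_eq {a : ℕ} (ha : 1 ≤ a) (haj : a < j) :
    belowCells μ T a j = runCells μ T a ∪ runCellsBelow μ T j :=
  belowCells_eq_union fun _ => hd.fst_add_one_lt_of_mem_runCells hT ha haj

lemma card_belowCells {a : ℕ} (ha : 1 ≤ a) (haj : a < j) :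
    #(belowCells μ T a j) = betaRun n μ T a + #(runCellsBelow μ T j) := by
  rw [hd.belowCells_eq hT ha haj, card_union_of_disjoint (disjoint_runCells_runCellsBelow haj.ne),
    hT.betaRun_eq_card ha]

lemma betaRun_le_snd_of_mem_runCellsBelow (hc : c ∈ runCellsBelow μ T j) :
    betaRun n μ T (c.1 + 1) ≤ c.2 := by
  obtain ⟨hc, hcj, hrow⟩ := mem_runCellsBelow.1 hc
  have := (hd.runIdx_lt_iff hT hc).not.1 (by omega)
  omega

lemma snd_lt_betaRun_of_mem_runCellsBelow (hc : c ∈ runCellsBelow μ T j) (h₁ : 1 ≤ c.1) :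
    c.2 < betaRun n μ T c.1 := by
  obtain ⟨hc, hcj, hrow⟩ := mem_runCellsBelow.1 hc
  have hlt := hT.runIdx_lt_of_lt_fst (show c.1 - 1 < c.1 by omega) hc
  rw [Prod.mk.eta, hcj] at hlt
  have := ((hd.runIdx_lt_iff hT (μ.up_left_mem (show c.1 - 1 ≤ c.1 by omega) le_rfl hc)).1
    hlt).2
  rwa [Nat.sub_add_cancel h₁] at this

lemma readRank_runCells_union {r : ℕ} (hr : 1 ≤ r) (hrj : r < j) {Q : Finset (ℕ × ℕ)}
    (hQ : ∀ d ∈ Q, d.1 + 1 ≤ r) (hc : c ∈ runCells μ T r) :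
    readRank (runCells μ T r ∪ Q) c = c.2 := by
  have hc' := (hd.runIdx_eq_iff hT hr hrj (mem_runCells.1 hc).1).1 (mem_runCells.1 hc).2
  refine readRank_eq_of_row_prefix (fun d hd' => ?_) fun y hy => ?_
  · rcases mem_union.1 hd' with h | h
    · have := ((hd.runIdx_eq_iff hT hr hrj (mem_runCells.1 h).1).1 (mem_runCells.1 h).2).1
      omega
    · have := hQ d h
      omega
  · rw [hc'.1]
    exact mem_union_left _ (hd.mem_runCells_of_lt hT hr hrj (by omega))

lemma readsBefore_of_mem_runCells_of_mem_runCellsBelow {r : ℕ} {e : ℕ × ℕ} (hr : 1 ≤ r)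
    (hrj : r < j) (he : e ∈ runCells μ T r) (hc : c ∈ runCellsBelow μ T j)
    (hrow : c.1 + 1 ≤ r) : ReadsBefore e c := by
  have hcol := hd.betaRun_le_snd_of_mem_runCellsBelow hT hc
  have := (hd.runIdx_eq_iff hT hr hrj (mem_runCells.1 he).1).1 (mem_runCells.1 he).2
  rcases hrow.lt_or_eq with h | h
  · exact Or.inl (by omega)
  · rw [h] at hcol
    exact Or.inr ⟨by omega, by omega⟩

lemma snd_lt_snd_of_mem_runCellsBelow {c' : ℕ × ℕ} (hc : c ∈ runCellsBelow μ T j)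
    (hc' : c' ∈ runCellsBelow μ T j) (h : c.1 < c'.1) : c'.2 < c.2 := by
  have := hd.snd_lt_betaRun_of_mem_runCellsBelow hT hc' (by omega)
  have := hd.betaRun_le_snd_of_mem_runCellsBelow hT hc
  have := hd.betaRun_antitone hT (show 1 ≤ c.1 + 1 by omega) (show c.1 + 1 ≤ c'.1 by omega)
    (by have := (mem_runCellsBelow.1 hc').2.2; omega)
  omega

/-! ### `slink_*` -/

variable {A : ℕ × ℕ → ℕ} (hrA : Redistrib μ T A i j (betaRun n μ T j + i - j))

section
include hrA

lemma runIdx_slinkStar (hc : c ∈ μ.cells) :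
    runIdx μ A (A c) = if c ∈ belowCells μ T i j then
      (if readRank (belowCells μ T i j) c < betaRun n μ T j + i - j then i else j)
      else runIdx μ T (T c) :=
  hrA.runIdx_eq (fun _ => hd.fst_add_one_lt_of_mem_runCells hT hd.one_le_i (hd.i_lt_j hT)) hc

lemma runCells_slinkStar_left :
    runCells μ A i = readPrefix (belowCells μ T i j) (betaRun n μ T j + i - j) :=
  hrA.runCells_left (fun _ => hd.fst_add_one_lt_of_mem_runCells hT hd.one_le_i (hd.i_lt_j hT))
    (hd.i_lt_j hT).ne

lemma runCells_slinkStar_right : runCells μ A j =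
    runCellsAbove μ T j ∪ readSuffix (belowCells μ T i j) (betaRun n μ T j + i - j) :=
  hrA.runCells_right (fun _ => hd.fst_add_one_lt_of_mem_runCells hT hd.one_le_i (hd.i_lt_j hT))
    (hd.i_lt_j hT).ne

lemma runCells_slinkStar_of_ne {r : ℕ} (hri : r ≠ i) (hrj : r ≠ j) :
    runCells μ A r = runCells μ T r :=
  hrA.runCells_of_ne (fun _ => hd.fst_add_one_lt_of_mem_runCells hT hd.one_le_i (hd.i_lt_j hT))
    hri hrj

lemma shapeRow_slinkStar (r : ℕ) : shapeRow μ A j r = shapeRow μ T j r :=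
  hrA.shapeRow_eq (fun _ => hd.fst_add_one_lt_of_mem_runCells hT hd.one_le_i (hd.i_lt_j hT))
    (hd.i_lt_j hT).le r

end

variable (hA : IsSYT n μ A)
include hrA hA

lemma lt_betaRun_add : j < betaRun n μ T j + i := by
  have hi := hd.one_le_i
  obtain ⟨c, hc⟩ :=
    card_pos.1 (hT.betaRun_eq_card hi ▸ hd.one_le_betaRun hT hi (hd.i_lt_j hT).le)
  have hcU : c ∈ belowCells μ T i j :=
    hd.belowCells_eq hT hi (hd.i_lt_j hT) ▸ mem_union_left _ hc
  have hle : i ≤ runIdx μ A (A c) := by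
    rw [hd.runIdx_slinkStar hT hrA (mem_runCells.1 hc).1, if_pos hcU]
    have := hd.i_lt_j hT
    split_ifs <;> omega
  have := card_pos.2 (hA.runCells_nonempty hi (mem_runCells.1 hc).1 hle)
  rw [hd.runCells_slinkStar_left hT hrA, card_readPrefix] at this
  omega

/-- The cells that `slink_*` puts into the `i`-th run stay in row `i - 1`: a lower cell would come
after all of row `i - 1`, contradicting the minimality of `i`, and a higher one would break the
rows of `A`. -/
lemma fst_eq_of_mem_readPrefix
    (hc : c ∈ readPrefix (belowCells μ T i j) (betaRun n μ T j + i - j)) : c.1 = i - 1 := by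
  have hij := hd.i_lt_j hT
  have hcA := mem_runCells.1 (hd.runCells_slinkStar_left hT hrA ▸ hc)
  obtain ⟨hcU, hrk⟩ := mem_filter.1 hc
  obtain ⟨-, hcr, hrow⟩ := mem_belowCells.1 hcU
  rcases lt_trichotomy c.1 (i - 1) with hlt | heq | hgt
  · have hmin := hd.lt_shapeRow_add (i' := i - 1) (by omega) (by omega)
    rw [Nat.sub_add_cancel hd.one_le_i] at hmin
    have hsub : {d ∈ μ.cells | runIdx μ T (T d) ≤ j ∧ d.1 = i - 1} ⊆
        {d ∈ belowCells μ T i j | ReadsBefore d c} := fun d hd' => by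
      obtain ⟨hdm, hdj, hdrow⟩ := mem_filter.1 hd'
      refine mem_filter.2 ⟨mem_belowCells.2 ⟨hdm, ?_, by omega⟩, Or.inl (by omega)⟩
      rcases hdj.lt_or_eq with hdj | hdj
      · have := (hd.runIdx_eq_iff hT (runIdx_pos μ T (T d)) hdj hdm).1 rfl
        omega
      · exact Or.inr hdj
    have := card_le_card hsub
    unfold shapeRow at hmin
    unfold readRank at hrk
    omega
  · exact heq
  · have hc₀ : (c.1, 0) ∈ μ.cells := μ.up_left_mem le_rfl (Nat.zero_le _) hcA.1
    have hr₀ : runIdx μ T (T (c.1, 0)) = c.1 + 1 :=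
      (hd.runIdx_eq_iff hT (by omega) hrow hc₀).2
        ⟨rfl, hd.one_le_betaRun hT (by omega) (by omega)⟩
    have hr₀' : runIdx μ A (A (c.1, 0)) = c.1 + 1 := by
      rw [hd.runIdx_slinkStar hT hrA hc₀, if_neg fun h => by
        rcases (mem_belowCells.1 h).2.1 with h | h <;> omega]
      exact hr₀
    have := hA.runIdx_le_of_le_snd (Nat.zero_le c.2) hcA.1
    rw [hr₀', Prod.mk.eta, hcA.2] at this
    omega

lemma fst_lt_of_mem_belowCells (hc : c ∈ belowCells μ T i j) : c.1 + 1 ≤ i := by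
  obtain ⟨c₀, hc₀, hrk₀⟩ := exists_readRank_eq (k := 0) (card_pos.2 ⟨c, hc⟩)
  have := hd.lt_betaRun_add hT hrA hA
  have hrow₀ := hd.fst_eq_of_mem_readPrefix hT hrA hA (mem_filter.2 ⟨hc₀, by omega⟩)
  have hi := hd.one_le_i
  by_contra h
  have := readRank_lt_readRank hc (Or.inl (by omega : c₀.1 < c.1))
  omega

lemma fst_add_one_lt_of_mem_runCells_slinkStar (hc : c ∈ runCells μ A i) : c.1 + 1 < j := by
  have := hd.fst_eq_of_mem_readPrefix hT hrA hA (hd.runCells_slinkStar_left hT hrA ▸ hc)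
  have := hd.one_le_i
  have := hd.i_lt_j hT
  omega

lemma fst_lt_of_mem_runCellsBelow (hc : c ∈ runCellsBelow μ T j) : c.1 + 1 ≤ i :=
  hd.fst_lt_of_mem_belowCells hT hrA hA
    (hd.belowCells_eq hT hd.one_le_i (hd.i_lt_j hT) ▸ mem_union_right _ hc)

lemma readRank_belowCells_of_mem_runCells (hc : c ∈ runCells μ T i) :
    readRank (belowCells μ T i j) c = c.2 := by
  rw [hd.belowCells_eq hT hd.one_le_i (hd.i_lt_j hT)]
  exact hd.readRank_runCells_union hT hd.one_le_i (hd.i_lt_j hT)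
    (fun d hd' => hd.fst_lt_of_mem_runCellsBelow hT hrA hA hd') hc

lemma card_filter_lt_fst_le {i' : ℕ} (hi' : 1 ≤ i') :
    #{c ∈ runCellsBelow μ T j | i' < c.1} ≤ betaRun n μ T (i' + 1) - betaRun n μ T i := by
  have hij := hd.i_lt_j hT
  refine (card_le_card_of_injOn Prod.snd
    (t := Ico (betaRun n μ T i) (betaRun n μ T (i' + 1))) (fun c hc => ?_)
    fun c hc c' hc' h => ?_).trans (Nat.card_Ico _ _).le
  · simp only [coe_filter, Set.mem_ofPred_eq] at hc
    have hrow := hd.fst_lt_of_mem_runCellsBelow hT hrA hA hc.1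
    have := hd.betaRun_le_snd_of_mem_runCellsBelow hT hc.1
    have := hd.snd_lt_betaRun_of_mem_runCellsBelow hT hc.1 (by omega)
    have := hd.betaRun_antitone hT (show 1 ≤ c.1 + 1 by omega) hrow hij
    have := hd.betaRun_antitone hT (show 1 ≤ i' + 1 by omega) (show i' + 1 ≤ c.1 by omega)
      (by omega)
    exact mem_coe.2 (mem_Ico.2 ⟨by omega, by omega⟩)
  · simp only [coe_filter, Set.mem_ofPred_eq] at hc hc'
    rcases lt_trichotomy c.1 c'.1 with hlt | heq | hgt
    · exact absurd h (hd.snd_lt_snd_of_mem_runCellsBelow hT hc.1 hc'.1 hlt).ne'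
    · exact Prod.ext heq h
    · exact absurd h (hd.snd_lt_snd_of_mem_runCellsBelow hT hc'.1 hc.1 hgt).ne

lemma readRank_belowCells_of_mem_runCellsBelow (hc : c ∈ runCellsBelow μ T j) :
    readRank (belowCells μ T i j) c = betaRun n μ T i + readRank (runCellsBelow μ T j) c := by
  rw [hd.belowCells_eq hT hd.one_le_i (hd.i_lt_j hT), readRank_union_of_readsBefore
    (disjoint_runCells_runCellsBelow (hd.i_lt_j hT).ne) fun e he =>
      hd.readsBefore_of_mem_runCells_of_mem_runCellsBelow hT hd.one_le_i (hd.i_lt_j hT) he hc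
        (hd.fst_lt_of_mem_runCellsBelow hT hrA hA hc),
    hT.betaRun_eq_card hd.one_le_i]

lemma betaRun_slinkStar : betaRun n μ A j = betaRun n μ T i + j - i := by
  have hi := hd.one_le_i
  have hij := hd.i_lt_j hT
  have hdisj : Disjoint (runCellsAbove μ T j)
      (readSuffix (belowCells μ T i j) (betaRun n μ T j + i - j)) :=
    disjoint_left.2 fun c h h' => by
      have := (mem_runCellsAbove.1 h).2.2
      have := (mem_belowCells.1 (mem_filter.1 h').1).2.2
      omega
  rw [hA.betaRun_eq_card (by omega), hd.runCells_slinkStar_right hT hrA,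
    card_union_of_disjoint hdisj, card_readSuffix, hd.card_belowCells hT hi hij]
  have := hd.card_runCellsAbove_le hT hi hij
  have := hT.betaRun_eq_card (show 1 ≤ j by omega)
  have := hd.shapeRow_add_le
  rw [card_runCells_eq_add] at *
  omega

lemma slinkData_slinkStar : SlinkData n μ A i j := by
  have hi := hd.one_le_i
  have hij := hd.i_lt_j hT
  have hβ := hd.betaRun_slinkStar hT hrA hA
  refine ⟨hd.1, fun hss => ?_, fun t ht => ?_, hi, ?_, fun i' hi' hi'i => ?_⟩
  · have hlt : betaRun n μ T j + i - j < #(belowCells μ T i j) := by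
      have := hd.card_runCellsAbove_le hT hi hij
      have := hd.one_le_betaRun hT hi hij.le
      have := hT.betaRun_eq_card (show 1 ≤ j by omega)
      rw [hd.card_belowCells hT hi hij]
      rw [card_runCells_eq_add] at *
      omega
    obtain ⟨c, hcU, hrk⟩ := exists_readRank_eq hlt
    have hcA := mem_runCells.1 (hd.runCells_slinkStar_right hT hrA ▸
      mem_union_right _ (mem_filter.2 ⟨hcU, hrk.ge⟩))
    have := hA.firstRunsSS_iff.1 hss c hcA.1 hcA.2.le
    have := (mem_belowCells.1 hcU).2.2
    omega
  · refine hA.firstRunsSS_iff.2 fun c hc hct => ?_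
    by_cases hci : runIdx μ A (A c) = i
    · rw [hci]
      exact hd.fst_eq_of_mem_readPrefix hT hrA hA
        (hd.runCells_slinkStar_left hT hrA ▸ mem_runCells.2 ⟨hc, hci⟩)
    · have hcT := mem_runCells.1 (hd.runCells_slinkStar_of_ne hT hrA hci (by omega) ▸
        mem_runCells.2 ⟨hc, rfl⟩)
      rw [← hcT.2]
      exact hT.firstRunsSS_iff.1 (hd.firstRunsSS_pred hT) c hc (by omega)
  · rw [hd.shapeRow_slinkStar hT hrA, hβ]
    have := hd.shapeRow_succ_le hT hi
    omega
  · rw [hd.shapeRow_slinkStar hT hrA, hβ]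
    have := hd.betaRun_le_shapeRow hT (show 1 ≤ i' + 1 by omega) (by omega)
    have := hd.betaRun_antitone hT (show 1 ≤ i' + 1 by omega) (show i' + 1 ≤ i by omega) hij
    omega

end SlinkData

/-! ### `slink` -/

/-- The cells that `slink` moves from the `j`-th into the `(j-1)`-st run when
`β_{j-1} < β_j`: `slink` hands the first `β_j - 1` cells of the `(j-1)`-st and `j`-th runs
below row `j` to the `(j-1)`-st run, and the whole `(j-1)`-st run comes first. -/
def slinkMovedCells (n : ℕ) (μ : YoungDiagram) (T : ℕ × ℕ → ℕ) (j : ℕ) :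
    Finset (ℕ × ℕ) :=
  readPrefix (runCellsBelow μ T j) (betaRun n μ T j - 1 - betaRun n μ T (j - 1))

lemma slinkMovedCells_subset {n : ℕ} {μ : YoungDiagram} {T : ℕ × ℕ → ℕ} {j : ℕ} :
    slinkMovedCells n μ T j ⊆ runCellsBelow μ T j :=
  filter_subset _ _

namespace SlinkData

variable {n : ℕ} {μ : YoungDiagram} {T A C : ℕ × ℕ → ℕ} {i j : ℕ} {c : ℕ × ℕ}
variable (hd : SlinkData n μ T i j) (hT : IsSYT n μ T)
include hd hT

lemma card_filter_runIdx_lt_or_mem {r : ℕ} (hr : 1 ≤ r) (hrj : r < j) {E : Finset (ℕ × ℕ)}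
    (hE : E ⊆ runCellsBelow μ T j) :
    #{c ∈ μ.cells | (runIdx μ T (T c) < j ∨ c ∈ E) ∧ c.1 = r - 1} =
      betaRun n μ T r + #{c ∈ E | c.1 = r - 1} := by
  have hset : {c ∈ μ.cells | (runIdx μ T (T c) < j ∨ c ∈ E) ∧ c.1 = r - 1} =
      runCells μ T r ∪ {c ∈ E | c.1 = r - 1} := by
    ext c
    simp only [mem_filter, mem_union, mem_runCells]
    constructor
    · rintro ⟨hc, hlt | hcE, hrow⟩
      · have := (hd.runIdx_eq_iff hT (runIdx_pos μ T (T c)) hlt hc).1 rfl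
        have := runIdx_pos μ T (T c)
        exact Or.inl ⟨hc, by omega⟩
      · exact Or.inr ⟨hcE, hrow⟩
    · rintro (⟨hc, hcr⟩ | ⟨hcE, hrow⟩)
      · exact ⟨hc, Or.inl (by omega), ((hd.runIdx_eq_iff hT hr hrj hc).1 hcr).1⟩
      · exact ⟨(mem_runCellsBelow.1 (hE hcE)).1, Or.inr hcE, hrow⟩
  have hdisj : Disjoint (runCells μ T r) {c ∈ E | c.1 = r - 1} :=
    disjoint_left.2 fun c h h' => by
      have := (mem_runCells.1 h).2
      have := (mem_runCellsBelow.1 (hE (mem_filter.1 h').1)).2.1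
      omega
  rw [hset, card_union_of_disjoint hdisj, hT.betaRun_eq_card hr]

lemma shapeRow_eq_add {r : ℕ} (hr : 1 ≤ r) (hrj : r < j) :
    shapeRow μ T j r = betaRun n μ T r + #{c ∈ runCellsBelow μ T j | c.1 = r - 1} := by
  rw [← hd.card_filter_runIdx_lt_or_mem hT hr hrj subset_rfl, shapeRow]
  refine congrArg card (filter_congr fun c hc => ?_)
  rw [mem_runCellsBelow]
  simp only [hc, true_and]
  omega

lemma betaRun_pred_add_two_le (hij : i + 1 < j) :
    betaRun n μ T (j - 1) + 2 ≤ betaRun n μ T j := by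
  have := hd.shapeRow_add_le
  have := hd.betaRun_le_shapeRow hT (show 1 ≤ i + 1 by omega) hij
  have := hd.betaRun_antitone hT (show 1 ≤ i + 1 by omega) (show i + 1 ≤ j - 1 by omega)
    (by omega)
  omega

lemma card_slinkMovedCells :
    #(slinkMovedCells n μ T j) = betaRun n μ T j - 1 - betaRun n μ T (j - 1) := by
  have hj := hd.two_le_j hT
  have := hd.card_runCellsAbove_le hT (r := j - 1) (by omega) (by omega)
  have := hT.betaRun_eq_card (show 1 ≤ j by omega)
  rw [card_runCells_eq_add] at this
  rw [slinkMovedCells, card_readPrefix]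
  omega

variable (hij : i + 1 < j) (hrC : Redistrib μ T C (j - 1) j (betaRun n μ T j - 1))

section
include hij hrC

lemma runIdx_slink (hc : c ∈ μ.cells) :
    runIdx μ C (C c) = if c ∈ slinkMovedCells n μ T j then j - 1 else runIdx μ T (T c) := by
  have hj := hd.two_le_j hT
  have hβ := hd.betaRun_pred_add_two_le hT hij
  rw [hrC.runIdx_eq (fun _ => hd.fst_add_one_lt_of_mem_runCells hT (by omega) (by omega)) hc,
    hd.belowCells_eq hT (by omega) (by omega)]
  by_cases hr : c ∈ runCells μ T (j - 1)
  · have hx : c ∉ slinkMovedCells n μ T j := fun hx =>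
      disjoint_left.1 (disjoint_runCells_runCellsBelow (by omega)) hr (slinkMovedCells_subset hx)
    have hcol := ((hd.runIdx_eq_iff hT (by omega) (by omega) (mem_runCells.1 hr).1).1
      (mem_runCells.1 hr).2).2
    rw [if_pos (mem_union_left _ hr), hd.readRank_runCells_union hT (by omega) (by omega)
      (fun d hd' => by have := (mem_runCellsBelow.1 hd').2.2; omega) hr,
      if_pos (by omega), if_neg hx, (mem_runCells.1 hr).2]
  by_cases hb : c ∈ runCellsBelow μ T j
  · rw [if_pos (mem_union_right _ hb), readRank_union_of_readsBefore
      (disjoint_runCells_runCellsBelow (by omega)) fun e he =>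
        hd.readsBefore_of_mem_runCells_of_mem_runCellsBelow hT (by omega) (by omega) he hb
          (by have := (mem_runCellsBelow.1 hb).2.2; omega),
      ← hT.betaRun_eq_card (by omega), (mem_runCellsBelow.1 hb).2.1]
    simp only [slinkMovedCells, readPrefix, mem_filter, hb, true_and]
    split_ifs <;> omega
  · have hx : c ∉ slinkMovedCells n μ T j := fun hx => hb (slinkMovedCells_subset hx)
    rw [if_neg (by simp [hr, hb]), if_neg hx]

lemma runCells_slink_pred :
    runCells μ C (j - 1) = runCells μ T (j - 1) ∪ slinkMovedCells n μ T j := by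
  ext c
  simp only [mem_runCells, mem_union]
  constructor
  · rintro ⟨hc, hcr⟩
    rw [hd.runIdx_slink hT hij hrC hc] at hcr
    split_ifs at hcr with hx
    · exact Or.inr hx
    · exact Or.inl ⟨hc, hcr⟩
  · rintro (⟨hc, hcr⟩ | hx)
    · refine ⟨hc, ?_⟩
      rw [hd.runIdx_slink hT hij hrC hc]
      split_ifs <;> simp [hcr]
    · have hc := (mem_runCellsBelow.1 (mem_filter.1 hx).1).1
      exact ⟨hc, by rw [hd.runIdx_slink hT hij hrC hc, if_pos hx]⟩

lemma runCells_slink_of_ne {r : ℕ} (hr : r ≠ j - 1) (hrj : r ≠ j) :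
    runCells μ C r = runCells μ T r := by
  refine filter_congr fun c hc => ?_
  rw [hd.runIdx_slink hT hij hrC hc]
  split_ifs with hx
  · simp only [(mem_runCellsBelow.1 (mem_filter.1 hx).1).2.1]
    omega
  · rfl

lemma betaRun_slink (hC : IsSYT n μ C) : betaRun n μ C (j - 1) = betaRun n μ T j - 1 := by
  have hj := hd.two_le_j hT
  have hdisj : Disjoint (runCells μ T (j - 1)) (slinkMovedCells n μ T j) :=
    (disjoint_runCells_runCellsBelow (by omega)).mono_right (filter_subset _ _)
  rw [hC.betaRun_eq_card (by omega), hd.runCells_slink_pred hT hij hrC,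
    card_union_of_disjoint hdisj, hd.card_slinkMovedCells hT, ← hT.betaRun_eq_card (by omega)]
  have := hd.betaRun_pred_add_two_le hT hij
  omega

lemma shapeRow_slink {r : ℕ} (hr : 1 ≤ r) (hrj : r < j) :
    shapeRow μ C (j - 1) r =
      betaRun n μ T r + #{c ∈ slinkMovedCells n μ T j | c.1 = r - 1} := by
  rw [← hd.card_filter_runIdx_lt_or_mem hT hr hrj slinkMovedCells_subset, shapeRow]
  refine congrArg card (filter_congr fun c hc => ?_)
  have hj := hd.two_le_j hT
  rw [hd.runIdx_slink hT hij hrC hc]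
  split_ifs with hx
  · simp only [hx, or_true, le_refl, true_and]
  · simp only [hx, or_false]
    omega

end

variable (hrA : Redistrib μ T A i j (betaRun n μ T j + i - j)) (hA : IsSYT n μ A)

section
include hij hrA hA

/-- The rows below row `i'` hold too few cells of the `j`-th run to fill `slinkMovedCells`, by
the column bounds on those rows; hence the minimality of `i` survives `slink`. -/
lemma lt_shapeRow_slink {i' : ℕ} (hi' : 1 ≤ i') (hi'i : i' < i) :
    betaRun n μ T j + i' <
      betaRun n μ T (i' + 1) + #{c ∈ slinkMovedCells n μ T j | c.1 = i'} + j := by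
  have hmin := hd.lt_shapeRow_add hi' hi'i
  rw [hd.shapeRow_eq_add hT (by omega) (by omega), Nat.add_sub_cancel] at hmin
  by_cases hsub : {c ∈ runCellsBelow μ T j | c.1 = i'} ⊆ slinkMovedCells n μ T j
  · have : {c ∈ slinkMovedCells n μ T j | c.1 = i'} = {c ∈ runCellsBelow μ T j | c.1 = i'} :=
      Subset.antisymm (filter_subset_filter _ slinkMovedCells_subset)
        fun c hc => mem_filter.2 ⟨hsub hc, (mem_filter.1 hc).2⟩
    rw [this]
    omega
  obtain ⟨c₂, hc₂, hc₂x⟩ := not_subset.1 hsub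
  obtain ⟨hc₂Q, hc₂row⟩ := mem_filter.1 hc₂
  have hrow : ∀ d ∈ slinkMovedCells n μ T j, i' ≤ d.1 := fun d hd' => by
    have hrk : ¬ readRank (runCellsBelow μ T j) c₂ < _ :=
      fun h => hc₂x (mem_filter.2 ⟨hc₂Q, h⟩)
    have := readsBefore_of_readRank_lt hc₂Q (lt_of_lt_of_le (mem_filter.1 hd').2 (not_lt.1 hrk))
    unfold ReadsBefore at this
    omega
  have hsplit : slinkMovedCells n μ T j ⊆
      {c ∈ runCellsBelow μ T j | i' < c.1} ∪ {c ∈ slinkMovedCells n μ T j | c.1 = i'} :=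
    fun d hd' => by
      rcases (hrow d hd').lt_or_eq with h | h
      · exact mem_union_left _ (mem_filter.2 ⟨slinkMovedCells_subset hd', h⟩)
      · exact mem_union_right _ (mem_filter.2 ⟨hd', h.symm⟩)
  have := (card_le_card hsplit).trans (card_union_le _ _)
  have := hd.card_slinkMovedCells hT
  have := hd.card_filter_lt_fst_le hT hrA hA hi'
  have := hd.betaRun_antitone hT (show 1 ≤ i' + 1 by omega) (show i' + 1 ≤ i by omega)
    (by omega)
  have := hd.betaRun_antitone hT hd.one_le_i (show i ≤ j - 1 by omega) (by omega)
  have := hd.shapeRow_add_le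
  omega

end

variable (hC : IsSYT n μ C)
include hij hrC hrA hA hC

lemma slinkData_slink : SlinkData n μ C i (j - 1) := by
  have hj := hd.two_le_j hT
  have hi := hd.one_le_i
  have hβ := hd.betaRun_pred_add_two_le hT hij
  have hx := hd.card_slinkMovedCells hT
  have hmoved : ∀ c ∈ slinkMovedCells n μ T j, c.1 + 1 ≤ i := fun c hc =>
    hd.fst_lt_of_mem_runCellsBelow hT hrA hA (slinkMovedCells_subset hc)
  refine ⟨by omega, fun hss => ?_, fun t ht => ?_, hi, ?_, fun i' hi' hi'i => ?_⟩
  · obtain ⟨c, hc⟩ := card_pos.1 (show 0 < #(slinkMovedCells n μ T j) by omega)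
    have hcC := mem_runCells.1 (hd.runCells_slink_pred hT hij hrC ▸ mem_union_right _ hc)
    have := hC.firstRunsSS_iff.1 hss c hcC.1 hcC.2.le
    have := hmoved c hc
    omega
  · refine hC.firstRunsSS_iff.2 fun c hc hct => ?_
    have hcx : c ∉ slinkMovedCells n μ T j := fun hcx => by
      rw [hd.runIdx_slink hT hij hrC hc, if_pos hcx] at hct
      omega
    rw [hd.runIdx_slink hT hij hrC hc, if_neg hcx] at hct ⊢
    exact hT.firstRunsSS_iff.1 (hd.firstRunsSS_pred hT) c hc (by omega)
  · rw [hd.shapeRow_slink hT hij hrC (by omega) hij, hd.betaRun_slink hT hij hrC hC,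
      filter_false_of_mem fun c hc => by have := hmoved c hc; omega, card_empty]
    have := hd.shapeRow_add_le
    have := hd.betaRun_le_shapeRow hT (show 1 ≤ i + 1 by omega) hij
    omega
  · rw [hd.shapeRow_slink hT hij hrC (by omega) (by omega), hd.betaRun_slink hT hij hrC hC,
      Nat.add_sub_cancel]
    have := hd.lt_shapeRow_slink hT hij hrA hA hi' hi'i
    omega

end SlinkData

/-! ### The two composites -/

namespace SlinkData

variable {n : ℕ} {μ : YoungDiagram} {T A B C D : ℕ × ℕ → ℕ} {i j : ℕ} {c : ℕ × ℕ}
variable (hd : SlinkData n μ T i j) (hT : IsSYT n μ T) (hij : i + 1 < j)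
variable (hrA : Redistrib μ T A i j (betaRun n μ T j + i - j))
include hd hT hij hrA

lemma runCells_slinkStar_pred : runCells μ A (j - 1) = runCells μ T (j - 1) :=
  hd.runCells_slinkStar_of_ne hT hrA (by omega) (by omega)

lemma belowCells_slinkStar_pred : belowCells μ A (j - 1) j =
    runCells μ T (j - 1) ∪ readSuffix (belowCells μ T i j) (betaRun n μ T j + i - j) := by
  rw [belowCells_eq_union fun d hd' => hd.fst_add_one_lt_of_mem_runCells hT (by omega) (by omega)
      (hd.runCells_slinkStar_pred hT hij hrA ▸ hd'),
    hd.runCells_slinkStar_pred hT hij hrA, hrA.runCellsBelow_right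
      (fun _ => hd.fst_add_one_lt_of_mem_runCells hT hd.one_le_i (hd.i_lt_j hT)) (hd.i_lt_j hT).ne]

variable (hA : IsSYT n μ A)
include hA

lemma readRank_belowCells_slinkStar_pred
    (hc : c ∈ readSuffix (belowCells μ T i j) (betaRun n μ T j + i - j)) :
    readRank (belowCells μ A (j - 1) j) c = betaRun n μ T (j - 1) +
      (readRank (belowCells μ T i j) c - (betaRun n μ T j + i - j)) := by
  have hrow := hd.fst_lt_of_mem_belowCells hT hrA hA (mem_filter.1 hc).1
  have hdisj : Disjoint (runCells μ T (j - 1))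
      (readSuffix (belowCells μ T i j) (betaRun n μ T j + i - j)) :=
    disjoint_left.2 fun d h h' => by
      have := (mem_runCells.1 h).2
      have := (mem_belowCells.1 (mem_filter.1 h').1).2.1
      omega
  rw [hd.belowCells_slinkStar_pred hT hij hrA, readRank_union_of_readsBefore hdisj fun e he => by
      have := ((hd.runIdx_eq_iff hT (by omega) (by omega) (mem_runCells.1 he).1).1
        (mem_runCells.1 he).2).1
      exact Or.inl (by omega),
    readRank_readSuffix hc, ← hT.betaRun_eq_card (by omega)]

lemma runIdx_slink_slinkStar (hrB : Redistrib μ A B (j - 1) j (betaRun n μ A j - 1))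
    (hc : c ∈ μ.cells) :
    runIdx μ B (B c) = if c ∈ belowCells μ T i j then
      (if readRank (belowCells μ T i j) c < betaRun n μ T j + i - j then i
        else if readRank (belowCells μ T i j) c <
          betaRun n μ T i + (betaRun n μ T j - 1 - betaRun n μ T (j - 1)) then j - 1 else j)
      else runIdx μ T (T c) := by
  have hj := hd.two_le_j hT
  have hβ := hd.betaRun_pred_add_two_le hT hij
  have hβi := hd.betaRun_antitone hT hd.one_le_i (show i ≤ j - 1 by omega) (by omega)
  have hsize := hd.shapeRow_add_le
  have hV := hd.belowCells_slinkStar_pred hT hij hrA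
  rw [hrB.runIdx_eq (fun d hd' => hd.fst_add_one_lt_of_mem_runCells hT (by omega) (by omega)
      (hd.runCells_slinkStar_pred hT hij hrA ▸ hd')) hc,
    hd.runIdx_slinkStar hT hrA hc, hd.betaRun_slinkStar hT hrA hA]
  by_cases hU : c ∈ belowCells μ T i j
  · by_cases hk : readRank (belowCells μ T i j) c < betaRun n μ T j + i - j
    · have hcV : c ∉ belowCells μ A (j - 1) j := by
        rw [hV, mem_union, readSuffix, mem_filter, mem_runCells]
        have := (mem_belowCells.1 hU).2.1
        omega
      simp only [hcV, hU, hk, if_true, if_false]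
    · have hcS : c ∈ readSuffix (belowCells μ T i j) (betaRun n μ T j + i - j) :=
        mem_filter.2 ⟨hU, by omega⟩
      rw [if_pos (hV ▸ mem_union_right _ hcS),
        hd.readRank_belowCells_slinkStar_pred hT hij hrA hA hcS,
        if_pos hU, if_neg hk]
      split_ifs <;> omega
  by_cases hr : c ∈ runCells μ T (j - 1)
  · have hcol := (hd.runIdx_eq_iff hT (by omega) (by omega) (mem_runCells.1 hr).1).1
      (mem_runCells.1 hr).2
    rw [if_pos (hV ▸ mem_union_left _ hr), hV, hd.readRank_runCells_union hT (by omega) (by omega)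
      (fun d hd' => by have := hd.fst_lt_of_mem_belowCells hT hrA hA (mem_filter.1 hd').1; omega)
      hr, if_pos (by omega), if_neg hU, (mem_runCells.1 hr).2]
  · have hcV : c ∉ belowCells μ A (j - 1) j := by
      rw [hV, mem_union, readSuffix, mem_filter]
      tauto
    simp only [hcV, hU, if_false]

variable (hrC : Redistrib μ T C (j - 1) j (betaRun n μ T j - 1))
include hrC

lemma belowCells_slink :
    belowCells μ C i (j - 1) = runCells μ T i ∪ slinkMovedCells n μ T j := by
  have hi := hd.one_le_i
  have hleft := hd.runCells_slink_of_ne hT hij hrC (r := i) (by omega) (by omega)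
  rw [belowCells_eq_union fun d hd' => ?_, hleft]
  · congr 1
    ext d
    rw [runCellsBelow, mem_filter, hd.runCells_slink_pred hT hij hrC, mem_union]
    constructor
    · rintro ⟨hd' | hd', hrow⟩
      · have := ((hd.runIdx_eq_iff hT (by omega) (by omega) (mem_runCells.1 hd').1).1
          (mem_runCells.1 hd').2).1
        omega
      · exact hd'
    · intro hd'
      have := hd.fst_lt_of_mem_runCellsBelow hT hrA hA (slinkMovedCells_subset hd')
      exact ⟨Or.inr hd', by omega⟩
  · have := ((hd.runIdx_eq_iff hT hi (by omega) (mem_runCells.1 (hleft ▸ hd')).1).1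
      (mem_runCells.1 (hleft ▸ hd')).2).1
    omega

lemma readRank_belowCells_slink_of_mem_runCells (hc : c ∈ runCells μ T i) :
    readRank (belowCells μ C i (j - 1)) c = c.2 := by
  rw [hd.belowCells_slink hT hij hrA hA hrC]
  exact hd.readRank_runCells_union hT hd.one_le_i (hd.i_lt_j hT)
    (fun d hd' => hd.fst_lt_of_mem_runCellsBelow hT hrA hA (slinkMovedCells_subset hd')) hc

lemma readRank_belowCells_slink_of_mem_slinkMovedCells (hc : c ∈ slinkMovedCells n μ T j) :
    readRank (belowCells μ C i (j - 1)) c = readRank (belowCells μ T i j) c := by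
  have hQ := slinkMovedCells_subset hc
  rw [hd.belowCells_slink hT hij hrA hA hrC,
    hd.readRank_belowCells_of_mem_runCellsBelow hT hrA hA hQ,
    readRank_union_of_readsBefore ((disjoint_runCells_runCellsBelow (hd.i_lt_j hT).ne).mono_right
      slinkMovedCells_subset) fun e he =>
        hd.readsBefore_of_mem_runCells_of_mem_runCellsBelow hT hd.one_le_i (hd.i_lt_j hT) he hQ
          (hd.fst_lt_of_mem_runCellsBelow hT hrA hA hQ),
    slinkMovedCells, readRank_readPrefix hc, ← hT.betaRun_eq_card hd.one_le_i]

lemma runIdx_slinkStar_slink (hC : IsSYT n μ C)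
    (hrD : Redistrib μ C D i (j - 1) (betaRun n μ C (j - 1) + i - (j - 1)))
    (hc : c ∈ μ.cells) :
    runIdx μ D (D c) = if c ∈ belowCells μ T i j then
      (if readRank (belowCells μ T i j) c < betaRun n μ T j + i - j then i
        else if readRank (belowCells μ T i j) c <
          betaRun n μ T i + (betaRun n μ T j - 1 - betaRun n μ T (j - 1)) then j - 1 else j)
      else runIdx μ T (T c) := by
  have hj := hd.two_le_j hT
  have hi := hd.one_le_i
  have hβ := hd.betaRun_pred_add_two_le hT hij
  have hβi := hd.betaRun_antitone hT hi (show i ≤ j - 1 by omega) (by omega)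
  have hsize := hd.shapeRow_add_le
  have hU := hd.belowCells_eq hT hi (hd.i_lt_j hT)
  have hUC := hd.belowCells_slink hT hij hrA hA hrC
  have hleft := hd.runCells_slink_of_ne hT hij hrC (r := i) (by omega) (by omega)
  rw [hrD.runIdx_eq (fun d hd' => by
      have := ((hd.runIdx_eq_iff hT hi (by omega) (mem_runCells.1 (hleft ▸ hd')).1).1
        (mem_runCells.1 (hleft ▸ hd')).2).1
      omega) hc,
    hd.betaRun_slink hT hij hrC hC, hd.runIdx_slink hT hij hrC hc]
  by_cases hr : c ∈ runCells μ T i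
  · have hcol := (hd.runIdx_eq_iff hT hi (by omega) (mem_runCells.1 hr).1).1 (mem_runCells.1 hr).2
    have hcUC : c ∈ belowCells μ C i (j - 1) := hUC ▸ mem_union_left _ hr
    have hcU : c ∈ belowCells μ T i j := hU ▸ mem_union_left _ hr
    rw [if_pos hcUC, if_pos hcU,
      hd.readRank_belowCells_slink_of_mem_runCells hT hij hrA hA hrC hr,
      hd.readRank_belowCells_of_mem_runCells hT hrA hA hr]
    split_ifs <;> omega
  by_cases hx : c ∈ slinkMovedCells n μ T j
  · have hQ := slinkMovedCells_subset hx
    have := (mem_filter.1 hx).2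
    have hcUC : c ∈ belowCells μ C i (j - 1) := hUC ▸ mem_union_right _ hx
    have hcU : c ∈ belowCells μ T i j := hU ▸ mem_union_right _ hQ
    rw [if_pos hcUC, if_pos hcU,
      hd.readRank_belowCells_slink_of_mem_slinkMovedCells hT hij hrA hA hrC hx,
      hd.readRank_belowCells_of_mem_runCellsBelow hT hrA hA hQ]
    split_ifs <;> omega
  rw [if_neg (by rw [hUC]; simp [hr, hx]), if_neg hx]
  by_cases hcU : c ∈ belowCells μ T i j
  · have hQ : c ∈ runCellsBelow μ T j := (mem_union.1 (hU ▸ hcU)).resolve_left hr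
    have hrk : ¬ readRank (runCellsBelow μ T j) c < _ := fun h => hx (mem_filter.2 ⟨hQ, h⟩)
    rw [if_pos hcU, hd.readRank_belowCells_of_mem_runCellsBelow hT hrA hA hQ,
      (mem_runCellsBelow.1 hQ).2.1]
    split_ifs <;> omega
  · rw [if_neg hcU]

end SlinkData

section Relations

variable {n : ℕ} {μ : YoungDiagram} {T T' : ℕ × ℕ → ℕ} {i j : ℕ}

lemma SlinkData.not_isSuperstandard (hd : SlinkData n μ T i j) : ¬ IsSuperstandard μ T :=
  fun hss => hd.2.1 (hss.firstRunsSS j)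

lemma SlinkStarRel.eq_of_isSuperstandard (h : SlinkStarRel n T T') (hT : IsSYT n μ T)
    (hss : IsSuperstandard μ T) : T' = T := by
  obtain ⟨μ', hT', -, ⟨-, h⟩ | ⟨hns, -⟩⟩ := h
  · exact h
  · exact absurd (hT.shape_eq hT' ▸ hss) hns

lemma SlinkRel.eq_of_isSuperstandard (h : SlinkRel n T T') (hT : IsSYT n μ T)
    (hss : IsSuperstandard μ T) : T' = T := by
  obtain ⟨μ', hT', -, ⟨-, h⟩ | ⟨hns, -⟩⟩ := h
  · exact h
  · exact absurd (hT.shape_eq hT' ▸ hss) hns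

lemma SlinkStarRel.exists_slinkData (h : SlinkStarRel n T T') (hT : IsSYT n μ T)
    (hss : ¬ IsSuperstandard μ T) : ∃ i j, SlinkData n μ T i j := by
  obtain ⟨μ', hT', -, ⟨hss', -⟩ | ⟨-, i, j, hd, -⟩⟩ := h
  · exact absurd (hT.shape_eq hT' ▸ hss') hss
  · exact ⟨i, j, hT'.shape_eq hT ▸ hd⟩

lemma SlinkStarRel.redistrib (h : SlinkStarRel n T T') (hT : IsSYT n μ T)
    (hd : SlinkData n μ T i j) :
    IsSYT n μ T' ∧ Redistrib μ T T' i j (betaRun n μ T j + i - j) := by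
  obtain ⟨μ', hT', hT'', h⟩ := h
  obtain rfl := hT.shape_eq hT'
  obtain ⟨hss, -⟩ | ⟨-, i', j', hd', h⟩ := h
  · exact absurd hss hd.not_isSuperstandard
  · obtain ⟨rfl, rfl⟩ := hd.unique hd'
    exact ⟨hT'', h⟩

lemma SlinkRel.redistrib (h : SlinkRel n T T') (hT : IsSYT n μ T) (hd : SlinkData n μ T i j) :
    IsSYT n μ T' ∧ Redistrib μ T T' (j - 1) j (betaRun n μ T j - 1) := by
  obtain ⟨μ', hT', hT'', h⟩ := h
  obtain rfl := hT.shape_eq hT'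
  obtain ⟨hss, -⟩ | ⟨-, i', j', hd', h⟩ := h
  · exact absurd hss hd.not_isSuperstandard
  · obtain ⟨rfl, rfl⟩ := hd.unique hd'
    exact ⟨hT'', h⟩

end Relations

/-- `slink` and `slink_*` commute: `slink(slink_*(T)) = slink_*(slink(T))`. -/
theorem slink_slinkStar_comm (n : ℕ) (T A B C D : ℕ × ℕ → ℕ)
    (h1 : SlinkStarRel n T A) (h2 : SlinkRel n A B)
    (h3 : SlinkRel n T C) (h4 : SlinkStarRel n C D) :
    B = D := by
  obtain ⟨μ, hT, -⟩ := id h1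
  by_cases hss : IsSuperstandard μ T
  · obtain rfl := h1.eq_of_isSuperstandard hT hss
    obtain rfl := h3.eq_of_isSuperstandard hT hss
    rw [h2.eq_of_isSuperstandard hT hss, h4.eq_of_isSuperstandard hT hss]
  obtain ⟨i, j, hd⟩ := h1.exists_slinkData hT hss
  obtain ⟨hA, hTA⟩ := h1.redistrib hT hd
  obtain ⟨hC, hTC⟩ := h3.redistrib hT hd
  have hdA := hd.slinkData_slinkStar hT hTA hA
  obtain ⟨hB, hAB⟩ := h2.redistrib hA hdA
  rcases Nat.lt_or_ge (i + 1) j with hij | hij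
  · obtain ⟨hD, hCD⟩ := h4.redistrib hC (hd.slinkData_slink hT hij hTC hTA hA hC)
    exact hB.ext_runIdx hD fun c hc => (hd.runIdx_slink_slinkStar hT hij hTA hA hAB hc).trans
      (hd.runIdx_slinkStar_slink hT hij hTA hA hTC hC hCD hc).symm
  -- for `j = i + 1` the maps `slink` and `slink_*` coincide
  obtain rfl : j = i + 1 := by have := hd.i_lt_j hT; omega
  have hk : ∀ b, b + i - (i + 1) = b - 1 := fun b => by omega
  rw [Nat.add_sub_cancel, ← hk] at hTC hAB
  obtain rfl : A = C := hTA.eq (fun _ => hd.fst_add_one_lt_of_mem_runCells hT hd.one_le_i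
    (hd.i_lt_j hT)) hA hC hTC
  obtain ⟨hD, hAD⟩ := h4.redistrib hA hdA
  exact hAB.eq (fun _ => hd.fst_add_one_lt_of_mem_runCells_slinkStar hT hTA hA) hB hD hAD
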